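/- arXiv:2209.09365 — 6 statements merged into one kernel-verified Lean document; each statement's English description precedes it below -/
import Mathlib

section
/- Let s ≥ 1 be an integer, let q be a nonzero complex number and fix a value τ of its logarithm; let λ, α₁, …, α_s be complex numbers and set Λ = e^{λτ} and qᵢ = e^{αᵢτ} for i = 1,…,s. Let a be a nonzero complex number and fix a value β of its logarithm. Suppose there exist constants c, ν > 0 such that |(λ + m₁α₁ + ⋯ + m_sα_s)τ − β − 2πm·i| > c·(m₁+⋯+m_s)^{−ν} for all nonnegative integers m₁,…,m_s not all zero and all integers m. Then there exists ν′ > 0 such that |Λ·q₁^{m₁}⋯q_s^{m_s} − a| > 2^{−ν′}·(m₁+⋯+m_s)^{−ν′} for all nonnegative integers m₁,…,m_s not all zero. -/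
/-!
With `z = (λ + Σ mᵢαᵢ)τ − β` the small divisor is `a (e^z − 1)`. On the strip `|Im w| ≤ π` the
function `e^w − 1` vanishes only at `w = 0`, to first order, so `|e^z − 1|` is at least a constant
times `min 1 (dist z 2πiℤ)`, and the hypothesis bounds this distance below by `c (Σ mᵢ)^(-ν)`.
The constants `‖a‖`, `c` and that of the strip are absorbed into `2^(-ν')` by enlarging `ν`.
-/

open Complex
open scoped Real

theorem exp_ne_one_of_abs_im_le_pi {w : ℂ} (hw : |w.im| ≤ π) (hw0 : w ≠ 0) : exp w ≠ 1 := by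
  intro h
  obtain ⟨n, rfl⟩ := exp_eq_one_iff.1 h
  have him : (n * (2 * π * I) : ℂ).im = 2 * π * n := by simp [mul_comm]
  rw [him, abs_mul, abs_of_pos (by positivity)] at hw
  have hn : |(n : ℝ)| < 1 := by nlinarith [Real.pi_pos]
  have hn : |n| < 1 := by exact_mod_cast hn
  simp [Int.abs_lt_one_iff.1 hn] at hw0

theorem half_lt_norm_exp_sub_one_of_one_le_abs_re {w : ℂ} (hw : 1 ≤ |w.re|) :
    1 / 2 < ‖exp w - 1‖ := by
  have hre : |Real.exp w.re - 1| ≤ ‖exp w - 1‖ := by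
    simpa [norm_exp] using abs_norm_sub_norm_le (exp w) 1
  refine lt_of_lt_of_le ?_ hre
  rcases le_abs'.1 hw with hneg | hpos
  · have : Real.exp w.re ≤ Real.exp (-1) := Real.exp_le_exp.2 (by linarith)
    rw [abs_of_neg (by linarith [Real.exp_neg_one_lt_half])]
    linarith [Real.exp_neg_one_lt_half]
  · have := Real.add_one_le_exp w.re
    rw [abs_of_nonneg (by linarith)]
    linarith

theorem norm_div_two_le_norm_exp_sub_one {w : ℂ} (hw : ‖w‖ ≤ 1 / 2) :
    ‖w‖ / 2 ≤ ‖exp w - 1‖ := by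
  have htaylor := norm_exp_sub_one_sub_id_le (x := w) (by linarith)
  have htri : ‖w‖ ≤ ‖exp w - 1‖ + ‖exp w - 1 - w‖ := by
    simpa only [sub_sub_cancel] using norm_sub_le (exp w - 1) (exp w - 1 - w)
  nlinarith [norm_nonneg w]

/-- Away from `0` the bound comes from compactness of `{|Re w| ≤ 1, |Im w| ≤ π, 1/2 ≤ ‖w‖}`, and
from `|e^{Re w} − 1|` when `|Re w| ≥ 1`. -/
theorem exists_pos_lt_norm_exp_sub_one :
    ∃ κ > 0, ∀ w : ℂ, |w.im| ≤ π → 1 / 2 ≤ ‖w‖ → κ < ‖exp w - 1‖ := by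
  set K : Set ℂ := {w | |w.re| ≤ 1 ∧ |w.im| ≤ π ∧ 1 / 2 ≤ ‖w‖}
  have hK : IsCompact K := by
    refine Metric.isCompact_of_isClosed_isBounded ?_ ?_
    · exact (isClosed_le (by fun_prop : Continuous fun w : ℂ => |w.re|) continuous_const).inter
        ((isClosed_le (by fun_prop : Continuous fun w : ℂ => |w.im|) continuous_const).inter
          (isClosed_le continuous_const continuous_norm))
    · refine (Metric.isBounded_closedBall (x := (0 : ℂ)) (r := 1 + π)).subset fun w hw => ?_
      rw [Metric.mem_closedBall, dist_zero_right]
      linarith [norm_le_abs_re_add_abs_im w, hw.1, hw.2.1]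
  have hne : K.Nonempty := ⟨1, by norm_num [K, Real.pi_pos.le]⟩
  have hcont : Continuous fun w : ℂ => ‖exp w - 1‖ := by fun_prop
  obtain ⟨w₀, ⟨-, hw₀im, hw₀⟩, hmin⟩ := hK.exists_isMinOn hne hcont.continuousOn
  have hpos : 0 < ‖exp w₀ - 1‖ := norm_pos_iff.2 <| sub_ne_zero.2 <|
    exp_ne_one_of_abs_im_le_pi hw₀im (norm_pos_iff.1 (by linarith))
  refine ⟨min (1 / 4) (‖exp w₀ - 1‖ / 2), by positivity, fun w him hw => ?_⟩
  rcases le_or_gt 1 |w.re| with hre | hre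
  · linarith [min_le_left (1 / 4) (‖exp w₀ - 1‖ / 2), half_lt_norm_exp_sub_one_of_one_le_abs_re hre]
  · have : ‖exp w₀ - 1‖ ≤ ‖exp w - 1‖ := hmin ⟨hre.le, him, hw⟩
    linarith [min_le_right (1 / 4) (‖exp w₀ - 1‖ / 2)]

theorem exists_abs_im_sub_two_pi_int_mul_I_le (z : ℂ) :
    ∃ m : ℤ, |(z - 2 * π * m * I).im| ≤ π := by
  refine ⟨round (z.im / (2 * π)), ?_⟩
  have hπ := Real.pi_pos
  have him : (z - 2 * π * round (z.im / (2 * π)) * I).im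
      = 2 * π * (z.im / (2 * π) - round (z.im / (2 * π))) := by
    field_simp; simp
  rw [him, abs_mul, abs_of_pos (by positivity)]
  nlinarith [abs_sub_round (z.im / (2 * π))]

theorem exists_mul_min_lt_norm_exp_sub_one :
    ∃ κ > 0, ∀ (z : ℂ) (δ : ℝ), 0 ≤ δ → (∀ m : ℤ, δ < ‖z - 2 * π * m * I‖) →
      κ * min 1 δ < ‖exp z - 1‖ := by
  obtain ⟨κ, hκ, hlarge⟩ := exists_pos_lt_norm_exp_sub_one
  refine ⟨min (1 / 2) κ, by positivity, fun z δ hδ hdist => ?_⟩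
  obtain ⟨m, him⟩ := exists_abs_im_sub_two_pi_int_mul_I_le z
  set w := z - 2 * π * m * I
  have hexp : exp w = exp z := by
    rw [show w = z - m * (2 * π * I) by ring, exp_sub, exp_int_mul_two_pi_mul_I, div_one]
  have hδw : δ < ‖w‖ := hdist m
  rw [← hexp]
  rcases le_or_gt ‖w‖ (1 / 2) with hsmall | hbig
  · calc min (1 / 2) κ * min 1 δ ≤ 1 / 2 * δ :=
          mul_le_mul (min_le_left _ _) (min_le_right _ _) (le_min zero_le_one hδ) (by norm_num)
      _ < ‖w‖ / 2 := by linarith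
      _ ≤ ‖exp w - 1‖ := norm_div_two_le_norm_exp_sub_one hsmall
  · calc min (1 / 2) κ * min 1 δ ≤ κ * 1 :=
          mul_le_mul (min_le_right _ _) (min_le_left _ _) (le_min zero_le_one hδ) hκ.le
      _ < ‖exp w - 1‖ := by simpa using hlarge w him hbig.le

theorem exists_two_rpow_neg_mul_rpow_neg_le {K : ℝ} (hK : 0 < K) (ν : ℝ) :
    ∃ ν' > (0 : ℝ), ∀ x : ℝ, 1 ≤ x → (2 : ℝ) ^ (-ν') * x ^ (-ν') ≤ K * x ^ (-ν) := by
  set ν' := max 1 (max ν (Real.logb 2 K⁻¹))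
  refine ⟨ν', by positivity, fun x hx => ?_⟩
  have h2 : (2 : ℝ) ^ (-ν') ≤ K := by
    have : -ν' ≤ Real.logb 2 K := by
      rw [← neg_neg (Real.logb 2 K), ← Real.logb_inv]
      exact neg_le_neg (le_max_of_le_right (le_max_right _ _))
    calc (2 : ℝ) ^ (-ν') ≤ 2 ^ Real.logb 2 K := Real.rpow_le_rpow_of_exponent_le one_le_two this
      _ = K := Real.rpow_logb two_pos (by norm_num) hK
  have hx' : x ^ (-ν') ≤ x ^ (-ν) :=
    Real.rpow_le_rpow_of_exponent_le hx (neg_le_neg (le_max_of_le_right (le_max_left _ _)))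
  exact mul_le_mul h2 hx' (by positivity) hK.le

theorem exp_mul_prod_exp_pow_sub_exp {ι : Type*} [Fintype ι] (lam τ β : ℂ) (α : ι → ℂ) (M : ι → ℕ) :
    exp (lam * τ) * ∏ i, exp (α i * τ) ^ M i - exp β
      = exp β * (exp ((lam + ∑ i, (M i : ℂ) * α i) * τ - β) - 1) := by
  rw [mul_sub_one, ← exp_add, add_sub_cancel]
  simp_rw [← exp_nat_mul, ← exp_sum, ← exp_add, add_mul, Finset.sum_mul, mul_assoc]

theorem stmt0_general (s : ℕ) (τ : ℂ)
    (lam : ℂ) (α : Fin s → ℂ) (a : ℂ) (β : ℂ) (hβ : Complex.exp β = a)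
    (c ν : ℝ) (hc : 0 < c) (hν : 0 < ν)
    (h : ∀ M : Fin s → ℕ, M ≠ 0 → ∀ m : ℤ,
      ‖(lam + ∑ i, (M i : ℂ) * α i) * τ - β - 2 * (Real.pi : ℂ) * (m : ℂ) * Complex.I‖
        > c * ((∑ i, M i : ℕ) : ℝ) ^ (-ν)) :
    ∃ ν' > (0 : ℝ), ∀ M : Fin s → ℕ, M ≠ 0 →
      ‖Complex.exp (lam * τ) * ∏ i, Complex.exp (α i * τ) ^ M i - a‖
        > (2 : ℝ) ^ (-ν') * ((∑ i, M i : ℕ) : ℝ) ^ (-ν') := by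
  obtain ⟨κ, hκ, hexp⟩ := exists_mul_min_lt_norm_exp_sub_one
  have ha : 0 < ‖a‖ := by rw [← hβ]; exact norm_pos_iff.2 (exp_ne_zero β)
  obtain ⟨ν', hν', hpow⟩ :=
    exists_two_rpow_neg_mul_rpow_neg_le (by positivity : 0 < ‖a‖ * κ * min 1 c) ν
  refine ⟨ν', hν', fun M hM => ?_⟩
  set N : ℝ := ((∑ i, M i : ℕ) : ℝ)
  have hN : 1 ≤ N := by
    rw [Nat.one_le_cast, Nat.one_le_iff_ne_zero, Ne, Finset.sum_eq_zero_iff]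
    exact fun hzero => hM (funext fun i => hzero i (Finset.mem_univ i))
  have hNν : N ^ (-ν) ≤ 1 := Real.rpow_le_one_of_one_le_of_nonpos hN (by linarith)
  have hmin : min 1 c * N ^ (-ν) ≤ min 1 (c * N ^ (-ν)) :=
    le_min (mul_le_one₀ (min_le_left _ _) (by positivity) hNν)
      (mul_le_mul_of_nonneg_right (min_le_right _ _) (by positivity))
  rw [← hβ, exp_mul_prod_exp_pow_sub_exp, norm_mul, hβ]
  calc (2 : ℝ) ^ (-ν') * N ^ (-ν') ≤ ‖a‖ * κ * min 1 c * N ^ (-ν) := hpow N hN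
    _ ≤ ‖a‖ * (κ * min 1 (c * N ^ (-ν))) := by
        rw [mul_assoc, mul_assoc]; gcongr
    _ < ‖a‖ * ‖exp ((lam + ∑ i, (M i : ℂ) * α i) * τ - β) - 1‖ :=
        mul_lt_mul_of_pos_left (hexp _ _ (by positivity) (h M hM)) ha

/-- Lemma 1 of the paper, first multiplicative estimate.
From the additive diophantine condition on logarithms one obtains a lower
bound on the small divisors `Λ·q₁^{m₁}⋯q_s^{m_s} − a`. -/
theorem stmt0 (s : ℕ) (hs : 1 ≤ s) (q : ℂ) (hq : q ≠ 0) (τ : ℂ) (hτ : Complex.exp τ = q)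
    (lam : ℂ) (α : Fin s → ℂ) (a : ℂ) (ha : a ≠ 0) (β : ℂ) (hβ : Complex.exp β = a)
    (c ν : ℝ) (hc : 0 < c) (hν : 0 < ν)
    (h : ∀ M : Fin s → ℕ, M ≠ 0 → ∀ m : ℤ,
      ‖(lam + ∑ i, (M i : ℂ) * α i) * τ - β - 2 * (Real.pi : ℂ) * (m : ℂ) * Complex.I‖
        > c * ((∑ i, M i : ℕ) : ℝ) ^ (-ν)) :
    ∃ ν' > (0 : ℝ), ∀ M : Fin s → ℕ, M ≠ 0 →
      ‖Complex.exp (lam * τ) * ∏ i, Complex.exp (α i * τ) ^ M i - a‖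
        > (2 : ℝ) ^ (-ν') * ((∑ i, M i : ℕ) : ℝ) ^ (-ν') :=
  stmt0_general s τ lam α a β hβ c ν hc hν h
end

section
/- Let s ≥ 1 be an integer, let q be a nonzero complex number and fix a value τ of its logarithm; let λ, α₁, …, α_s be complex numbers and set Λ = e^{λτ} and qᵢ = e^{αᵢτ} for i = 1,…,s. Let a be a nonzero complex number and fix a value β of its logarithm. Suppose there exist constants c, ν > 0 such that |(λ + m₁α₁ + ⋯ + m_sα_s)τ − β − 2πm·i| > c·(m₁+⋯+m_s)^{−ν} for all nonnegative integers m₁,…,m_s not all zero and all integers m. Then there exists ν′ > 0 such that |a·q₁^{−m₁}⋯q_s^{−m_s} − Λ| > 2^{−ν′}·(m₁+⋯+m_s)^{−ν′} for all nonnegative integers m₁,…,m_s not all zero. -/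
/-!
Writing `z = β - (λ + ∑ mᵢ αᵢ) τ`, the quantity to bound is `Λ (e^z - 1)`, and the hypothesis says
that `z` stays at distance `> c (∑ mᵢ)^(-ν)` from `2πiℤ`. After translating `z` by a multiple of
`2πi` so that `|Im z| ≤ π`, the real part controls `|e^z - 1|` through `|e^{Re z} - 1|` and the
imaginary part through `|sin (Im z)|` (or through `Re (e^z - 1) ≤ -1` once `cos (Im z) ≤ 0`),
which gives `|e^z - 1| ≥ min (dist (z, 2πiℤ)) 1 / 4`. The constant `|Λ| min c 1 / 4` is then
absorbed into `2^(-ν')` for `ν' ≥ ν` large.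
-/

open Real

theorem Real.min_abs_one_div_two_le_abs_exp_sub_one (x : ℝ) : min |x| 1 / 2 ≤ |exp x - 1| := by
  rcases le_or_gt 0 x with hx | hx
  · have := add_one_le_exp x
    rw [abs_of_nonneg hx, abs_of_nonneg (by linarith)]
    linarith [min_le_left x 1]
  · have hmul : exp x * (1 - x) ≤ 1 := by
      calc exp x * (1 - x) ≤ exp x * exp (-x) := by gcongr; linarith [add_one_le_exp (-x)]
        _ = 1 := by rw [← exp_add, add_neg_cancel, exp_zero]
    have hlt : exp x < 1 := exp_lt_one_iff.2 hx
    rw [abs_of_neg hx, abs_of_neg (by linarith)]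
    rcases le_total (-x) 1 with h1 | h1
    · rw [min_eq_left h1]; nlinarith [exp_pos x]
    · rw [min_eq_right h1]; nlinarith [exp_pos x]

namespace Complex

theorem abs_sin_im_le_norm_exp_sub_one (w : ℂ) : |Real.sin w.im| ≤ ‖exp w - 1‖ := by
  have key : ‖exp w - 1‖ ^ 2 = (Real.exp w.re - Real.cos w.im) ^ 2 + Real.sin w.im ^ 2 := by
    rw [Complex.sq_norm, normSq_apply]
    simp only [sub_re, sub_im, exp_re, exp_im, one_re, one_im]
    linear_combination
      Real.exp w.re ^ 2 * Real.sin_sq_add_cos_sq w.im - Real.sin_sq_add_cos_sq w.im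
  exact abs_le_of_sq_le_sq (by nlinarith) (norm_nonneg _)

theorem one_le_norm_exp_sub_one_of_cos_im_nonpos {w : ℂ} (hw : Real.cos w.im ≤ 0) :
    1 ≤ ‖exp w - 1‖ := by
  have hre : (exp w - 1).re ≤ -1 := by
    simp only [sub_re, exp_re, one_re]
    nlinarith [Real.exp_pos w.re]
  calc (1 : ℝ) ≤ |(exp w - 1).re| := by rw [abs_of_neg (by linarith)]; linarith
    _ ≤ ‖exp w - 1‖ := abs_re_le_norm _

theorem min_abs_re_one_div_two_le_norm_exp_sub_one (w : ℂ) :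
    min |w.re| 1 / 2 ≤ ‖exp w - 1‖ :=
  calc min |w.re| 1 / 2 ≤ |Real.exp w.re - 1| := Real.min_abs_one_div_two_le_abs_exp_sub_one _
    _ = |‖exp w‖ - ‖(1 : ℂ)‖| := by rw [norm_exp, norm_one]
    _ ≤ ‖exp w - 1‖ := abs_norm_sub_norm_le _ _

theorem min_abs_im_one_div_two_le_norm_exp_sub_one {w : ℂ} (hw : |w.im| ≤ π) :
    min |w.im| 1 / 2 ≤ ‖exp w - 1‖ := by
  rcases le_total |w.im| (π / 2) with hy | hy
  · calc min |w.im| 1 / 2 ≤ 1 / 2 * |w.im| := by linarith [min_le_left |w.im| 1]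
      _ ≤ 2 / π * |w.im| := by
          gcongr ?_ * |w.im|
          rw [div_le_div_iff₀ two_pos pi_pos]
          linarith [pi_lt_four]
      _ ≤ Real.sin |w.im| := mul_le_sin (abs_nonneg _) hy
      _ = |Real.sin w.im| := (abs_sin_eq_sin_abs_of_abs_le_pi hw).symm
      _ ≤ ‖exp w - 1‖ := abs_sin_im_le_norm_exp_sub_one w
  · have hcos : Real.cos w.im ≤ 0 := by
      rw [← Real.cos_abs]
      exact cos_nonpos_of_pi_div_two_le_of_le hy (by linarith)
    linarith [min_le_right |w.im| 1, one_le_norm_exp_sub_one_of_cos_im_nonpos hcos]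

theorem min_norm_one_div_four_le_norm_exp_sub_one {w : ℂ} (hw : |w.im| ≤ π) :
    min ‖w‖ 1 / 4 ≤ ‖exp w - 1‖ := by
  have hsplit : min ‖w‖ 1 ≤ min |w.re| 1 + min |w.im| 1 := by
    grind [norm_le_abs_re_add_abs_im, abs_nonneg]
  linarith [min_abs_re_one_div_two_le_norm_exp_sub_one w,
    min_abs_im_one_div_two_le_norm_exp_sub_one hw]

theorem min_one_div_four_le_norm_exp_sub_one {z : ℂ} {δ : ℝ}
    (h : ∀ k : ℤ, δ ≤ ‖z - 2 * π * k * I‖) : min δ 1 / 4 ≤ ‖exp z - 1‖ := by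
  set k := round (z.im / (2 * π))
  have hexp : exp (z - 2 * π * k * I) = exp z := by
    rw [exp_sub, show (2 * π * k * I : ℂ) = k * (2 * π * I) by ring, exp_int_mul_two_pi_mul_I,
      div_one]
  have him : |(z - 2 * π * k * I).im| ≤ π := by
    have hround := abs_sub_round (z.im / (2 * π))
    have : (z - 2 * π * k * I).im = 2 * π * (z.im / (2 * π) - k) := by
      rw [mul_sub, mul_div_cancel₀ _ (by positivity)]
      simp
    rw [this, abs_mul, abs_of_pos (by positivity)]
    nlinarith [pi_pos]
  calc min δ 1 / 4 ≤ min ‖z - 2 * π * k * I‖ 1 / 4 := by gcongr; exact h k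
    _ ≤ ‖exp z - 1‖ := hexp ▸ min_norm_one_div_four_le_norm_exp_sub_one him

theorem prod_exp_mul_zpow_neg {ι : Type*} [Fintype ι] (α : ι → ℂ) (τ : ℂ) (M : ι → ℕ) :
    ∏ i, exp (α i * τ) ^ (-(M i : ℤ)) = exp (-((∑ i, M i * α i) * τ)) := by
  rw [Finset.sum_mul, ← Finset.sum_neg_distrib, exp_sum]
  refine Finset.prod_congr rfl fun i _ => ?_
  rw [← exp_int_mul]
  congr 1
  push_cast
  ring

end Complex

theorem exists_ge_two_rpow_neg_lt (ν C : ℝ) (hC : 0 < C) : ∃ ν' ≥ ν, (2 : ℝ) ^ (-ν') < C :=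
  have h2 := (tendsto_rpow_atBot_of_base_gt_one 2 one_lt_two).comp Filter.tendsto_neg_atTop_atBot
  ((h2.eventually (gt_mem_nhds hC)).and (Filter.eventually_ge_atTop ν)).exists.imp
    fun _ h => ⟨h.2, h.1⟩

theorem stmt1_general (s : ℕ) (τ : ℂ)
    (lam : ℂ) (α : Fin s → ℂ) (a : ℂ) (β : ℂ) (hβ : Complex.exp β = a)
    (c ν : ℝ) (hc : 0 < c) (hν : 0 < ν)
    (h : ∀ M : Fin s → ℕ, M ≠ 0 → ∀ m : ℤ,
      ‖(lam + ∑ i, (M i : ℂ) * α i) * τ - β - 2 * (Real.pi : ℂ) * (m : ℂ) * Complex.I‖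
        > c * ((∑ i, M i : ℕ) : ℝ) ^ (-ν)) :
    ∃ ν' > (0 : ℝ), ∀ M : Fin s → ℕ, M ≠ 0 →
      ‖a * ∏ i, Complex.exp (α i * τ) ^ (-(M i : ℤ)) - Complex.exp (lam * τ)‖
        > (2 : ℝ) ^ (-ν') * ((∑ i, M i : ℕ) : ℝ) ^ (-ν') := by
  set K := ‖Complex.exp (lam * τ)‖
  have hK : 0 < K := norm_pos_iff.2 (Complex.exp_ne_zero _)
  obtain ⟨ν', hνν', hν'⟩ := exists_ge_two_rpow_neg_lt ν (K * min c 1 / 4) (by positivity)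
  refine ⟨ν', hν.trans_le hνν', fun M hM => ?_⟩
  set S : ℝ := ((∑ i, M i : ℕ) : ℝ)
  set z := β - (lam + ∑ i, (M i : ℂ) * α i) * τ
  have hS : 1 ≤ S := by
    have : ∑ i, M i ≠ 0 := by simpa [Finset.sum_eq_zero_iff, funext_iff] using hM
    exact Nat.one_le_cast.2 (Nat.one_le_iff_ne_zero.2 this)
  have hSν : S ^ (-ν) ≤ 1 := Real.rpow_le_one_of_one_le_of_nonpos hS (by linarith)
  have hdist : ∀ k : ℤ, c * S ^ (-ν) ≤ ‖z - 2 * Real.pi * k * Complex.I‖ := fun k => by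
    refine (h M hM (-k)).le.trans_eq ?_
    rw [← norm_neg]
    congr 1
    push_cast
    ring
  have hfactor : a * ∏ i, Complex.exp (α i * τ) ^ (-(M i : ℤ)) - Complex.exp (lam * τ)
      = Complex.exp (lam * τ) * (Complex.exp z - 1) := by
    rw [Complex.prod_exp_mul_zpow_neg, ← hβ, mul_sub_one, ← Complex.exp_add,
      ← Complex.exp_add]
    congr 2
    ring
  calc (2 : ℝ) ^ (-ν') * S ^ (-ν') < K * min c 1 / 4 * S ^ (-ν') := by gcongr
    _ ≤ K * min c 1 / 4 * S ^ (-ν) := by gcongr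
    _ ≤ K * (min (c * S ^ (-ν)) 1 / 4) := by
        rw [mul_div_assoc, mul_assoc, div_mul_eq_mul_div]
        gcongr
        exact le_min (by gcongr; exact min_le_left c 1)
          (mul_le_one₀ (min_le_right c 1) (by positivity) hSν)
    _ ≤ K * ‖Complex.exp z - 1‖ := by
        gcongr
        exact Complex.min_one_div_four_le_norm_exp_sub_one hdist
    _ = _ := by rw [hfactor, norm_mul]

/-- Lemma 1 of the paper, second multiplicative estimate
(negative integer exponents, written with −mᵢ for nonnegative mᵢ). -/
theorem stmt1 (s : ℕ) (hs : 1 ≤ s) (q : ℂ) (hq : q ≠ 0) (τ : ℂ) (hτ : Complex.exp τ = q)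
    (lam : ℂ) (α : Fin s → ℂ) (a : ℂ) (ha : a ≠ 0) (β : ℂ) (hβ : Complex.exp β = a)
    (c ν : ℝ) (hc : 0 < c) (hν : 0 < ν)
    (h : ∀ M : Fin s → ℕ, M ≠ 0 → ∀ m : ℤ,
      ‖(lam + ∑ i, (M i : ℂ) * α i) * τ - β - 2 * (Real.pi : ℂ) * (m : ℂ) * Complex.I‖
        > c * ((∑ i, M i : ℕ) : ℝ) ^ (-ν)) :
    ∃ ν' > (0 : ℝ), ∀ M : Fin s → ℕ, M ≠ 0 →
      ‖a * ∏ i, Complex.exp (α i * τ) ^ (-(M i : ℤ)) - Complex.exp (lam * τ)‖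
        > (2 : ℝ) ^ (-ν') * ((∑ i, M i : ℕ) : ℝ) ^ (-ν') :=
  stmt1_general s τ lam α a β hβ c ν hc hν h
end

section
/- Let s ≥ 1 be an integer, let q be a nonzero complex number and fix a value τ of its logarithm; let α₁, …, α_s be complex numbers and set qᵢ = e^{αᵢτ} for i = 1,…,s. Suppose there exist constants c, ν > 0 such that |(m₁α₁ + ⋯ + m_sα_s)τ − 2πm·i| > c·(m₁+⋯+m_s)^{−ν} for all nonnegative integers m₁,…,m_s not all zero and all integers m. Then there exists ν′ > 0 such that both |q₁^{m₁}⋯q_s^{m_s} − 1| > 2^{−ν′}·(m₁+⋯+m_s)^{−ν′} and |q₁^{−m₁}⋯q_s^{−m_s} − 1| > 2^{−ν′}·(m₁+⋯+m_s)^{−ν′} for all nonnegative integers m₁,…,m_s not all zero. -/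
/-!
Write `w = (∑ Mᵢ αᵢ) τ`, so that the two products are `exp w` and `exp (-w)`, and the hypothesis
says that `w` stays at distance more than `δ = c N^{-ν}` from the lattice `2πiℤ`, where `N = ∑ Mᵢ`.
Shifting `w` by a lattice point into the strip `|Im w| ≤ π`, either `|Re w|` is comparable to `δ`,
and then `|exp w - 1| ≥ |exp (Re w) - 1|` is, or `|Im w|` is, and then Jordan's inequality bounds
the chord `|exp (i Im w) - 1|` from below. In both cases `|exp (±w) - 1| > min δ 1 / 16`, which
dominates `2^{-ν'} N^{-ν'}` once `2^{ν'} ≥ 32 / min c 1` and `ν' ≥ ν`.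
-/

open scoped Real

theorem Real.abs_div_one_add_abs_le_abs_exp_sub_one (x : ℝ) :
    |x| / (1 + |x|) ≤ |Real.exp x - 1| := by
  rcases le_or_gt 0 x with hx | hx
  · rw [abs_of_nonneg hx, abs_of_nonneg (by linarith [Real.add_one_le_exp x])]
    calc x / (1 + x) ≤ x := div_le_self hx (by linarith)
      _ ≤ Real.exp x - 1 := by linarith [Real.add_one_le_exp x]
  · have hexp : (1 - x) * Real.exp x ≤ 1 := by
      have hneg : 1 - x ≤ Real.exp (-x) := by linarith [Real.add_one_le_exp (-x)]
      have := mul_le_mul_of_nonneg_right hneg (Real.exp_pos x).le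
      rwa [← Real.exp_add, neg_add_cancel, Real.exp_zero] at this
    rw [abs_of_neg hx, abs_of_neg (by simpa using hx), div_le_iff₀ (by linarith)]
    nlinarith

namespace Complex

theorem two_div_pi_mul_abs_le_norm_exp_I_mul_ofReal_sub_one {t : ℝ} (ht : |t| ≤ π) :
    2 / π * |t| ≤ ‖exp (I * t) - 1‖ := by
  have hsin := Real.mul_abs_le_abs_sin (x := t / 2) (by rw [abs_div, abs_two]; linarith)
  rw [norm_exp_I_mul_ofReal_sub_one, Real.norm_eq_abs, abs_mul, abs_two]
  rw [abs_div, abs_two] at hsin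
  linarith

theorem div_sixteen_lt_norm_exp_sub_one_of_abs_im_le_pi {w : ℂ} {δ : ℝ} (hδ : 0 < δ)
    (hδ1 : δ ≤ 1) (hw : δ < ‖w‖) (him : |w.im| ≤ π) : δ / 16 < ‖exp w - 1‖ := by
  rcases le_or_gt (δ / 8) |w.re| with hre | hre
  · have hre_le : |Real.exp w.re - 1| ≤ ‖exp w - 1‖ := by
      simpa [norm_exp] using abs_norm_sub_norm_le (exp w) 1
    refine lt_of_lt_of_le ?_ ((Real.abs_div_one_add_abs_le_abs_exp_sub_one w.re).trans hre_le)
    rw [lt_div_iff₀ (by positivity)]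
    nlinarith
  · have hsplit : exp w - 1 - exp (I * w.im) * (Real.exp w.re - 1) = exp (I * w.im) - 1 := by
      have hpolar : exp w = exp (I * w.im) * exp w.re := by
        rw [← exp_add, mul_comm I, add_comm, re_add_im]
      rw [ofReal_exp, hpolar]; ring
    have herr : ‖exp (I * w.im) * (Real.exp w.re - 1)‖ ≤ 2 * |w.re| := by
      rw [norm_mul, norm_exp_I_mul_ofReal, one_mul, ← ofReal_one, ← ofReal_sub, norm_real,
        Real.norm_eq_abs]
      exact Real.abs_exp_sub_one_le (by linarith)
    have him_gt : 7 * δ / 8 < |w.im| := by linarith [norm_le_abs_re_add_abs_im w]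
    have hchord := two_div_pi_mul_abs_le_norm_exp_I_mul_ofReal_sub_one him
    have hchord' : 7 * δ / (4 * π) < 2 / π * |w.im| := by
      rw [div_mul_eq_mul_div, div_lt_div_iff₀ (by positivity) Real.pi_pos]; nlinarith [Real.pi_pos]
    have hpi : δ / 16 + δ / 4 < 7 * δ / (4 * π) := by
      rw [lt_div_iff₀ (by positivity)]; nlinarith [Real.pi_lt_four]
    have htri := norm_sub_le (exp w - 1) (exp (I * w.im) * (Real.exp w.re - 1))
    rw [hsplit] at htri
    linarith

theorem exists_int_abs_im_sub_two_pi_mul_I_le_pi (w : ℂ) :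
    ∃ m : ℤ, |(w - 2 * π * m * I).im| ≤ π := by
  refine ⟨round (w.im / (2 * π)), ?_⟩
  have hround := abs_sub_round (w.im / (2 * π))
  have him : (w - 2 * π * round (w.im / (2 * π)) * I).im
      = 2 * π * (w.im / (2 * π) - round (w.im / (2 * π))) := by
    simp only [sub_im, mul_I_im, mul_re, re_ofNat, ofReal_re, im_ofNat, ofReal_im, intCast_re,
      intCast_im]
    field_simp
    ring
  rw [him, abs_mul, abs_of_pos Real.two_pi_pos]
  nlinarith [Real.pi_pos]

theorem div_sixteen_lt_norm_exp_sub_one {w : ℂ} {δ : ℝ} (hδ : 0 < δ) (hδ1 : δ ≤ 1)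
    (h : ∀ m : ℤ, δ < ‖w - 2 * π * m * I‖) : δ / 16 < ‖exp w - 1‖ := by
  obtain ⟨m, hm⟩ := exists_int_abs_im_sub_two_pi_mul_I_le_pi w
  have hperiod : exp (w - 2 * π * m * I) = exp w := by
    rw [exp_sub, show 2 * π * m * I = m * (2 * π * I) by ring, exp_int_mul_two_pi_mul_I, div_one]
  rw [← hperiod]
  exact div_sixteen_lt_norm_exp_sub_one_of_abs_im_le_pi hδ hδ1 (h m) hm

theorem div_sixteen_lt_norm_exp_neg_sub_one {w : ℂ} {δ : ℝ} (hδ : 0 < δ) (hδ1 : δ ≤ 1)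
    (h : ∀ m : ℤ, δ < ‖w - 2 * π * m * I‖) : δ / 16 < ‖exp (-w) - 1‖ := by
  refine div_sixteen_lt_norm_exp_sub_one hδ hδ1 fun m => ?_
  have hm := h (-m)
  rwa [← norm_neg, show -(w - 2 * π * ((-m : ℤ) : ℂ) * I) = -w - 2 * π * m * I by push_cast; ring]
    at hm

theorem prod_exp_zpow {ι : Type*} (s : Finset ι) (a : ι → ℂ) (k : ι → ℤ) :
    ∏ i ∈ s, exp (a i) ^ k i = exp (∑ i ∈ s, k i * a i) := by
  rw [exp_sum]
  exact Finset.prod_congr rfl fun i _ => (exp_int_mul _ _).symm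

end Complex

theorem exists_two_rpow_neg_mul_rpow_neg_lt {c : ℝ} (hc : 0 < c) (ν : ℝ) :
    ∃ ν' > (0 : ℝ), ∀ x : ℝ, 1 ≤ x → 2 ^ (-ν') * x ^ (-ν') < min (c * x ^ (-ν)) 1 / 16 := by
  set L := Real.logb 2 (32 / min c 1)
  have hmin : 0 < min c 1 := lt_min hc one_pos
  have hL : (2 : ℝ) ^ (-L) = min c 1 / 32 := by
    rw [Real.rpow_neg zero_le_two, Real.rpow_logb two_pos (by norm_num) (by positivity), inv_div]
  have hL_pos : 0 < L := Real.logb_pos one_lt_two (by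
    rw [lt_div_iff₀ hmin]; linarith [min_le_right c 1])
  refine ⟨max ν 0 + L, by positivity, fun x hx => ?_⟩
  have h2 : (2 : ℝ) ^ (-(max ν 0 + L)) ≤ min c 1 / 32 :=
    hL ▸ Real.rpow_le_rpow_of_exponent_le one_le_two (by linarith [le_max_right ν 0])
  have hxν : x ^ (-(max ν 0 + L)) ≤ x ^ (-ν) :=
    Real.rpow_le_rpow_of_exponent_le hx (by linarith [le_max_left ν 0])
  have hx1 : x ^ (-(max ν 0 + L)) ≤ 1 :=
    Real.rpow_le_one_of_one_le_of_nonpos hx (by linarith [le_max_right ν 0])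
  have hpos : 0 < x ^ (-ν) := Real.rpow_pos_of_pos (by linarith) _
  rw [lt_div_iff₀ (by norm_num), lt_min_iff]
  constructor
  · calc 2 ^ (-(max ν 0 + L)) * x ^ (-(max ν 0 + L)) * 16 ≤ c / 32 * x ^ (-ν) * 16 := by
          gcongr
          · exact h2.trans (by gcongr; exact min_le_left c 1)
      _ < c * x ^ (-ν) := by nlinarith
  · calc 2 ^ (-(max ν 0 + L)) * x ^ (-(max ν 0 + L)) * 16 ≤ 1 / 32 * 1 * 16 := by
          gcongr
          · exact h2.trans (by gcongr; exact min_le_right c 1)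
      _ < 1 := by norm_num

theorem stmt2_general (s : ℕ) (τ : ℂ)
    (α : Fin s → ℂ)
    (c ν : ℝ) (hc : 0 < c)
    (h : ∀ M : Fin s → ℕ, M ≠ 0 → ∀ m : ℤ,
      ‖(∑ i, (M i : ℂ) * α i) * τ - 2 * (Real.pi : ℂ) * (m : ℂ) * Complex.I‖
        > c * ((∑ i, M i : ℕ) : ℝ) ^ (-ν)) :
    ∃ ν' > (0 : ℝ), ∀ M : Fin s → ℕ, M ≠ 0 →
      ‖∏ i, Complex.exp (α i * τ) ^ M i - 1‖
        > (2 : ℝ) ^ (-ν') * ((∑ i, M i : ℕ) : ℝ) ^ (-ν') ∧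
      ‖∏ i, Complex.exp (α i * τ) ^ (-(M i : ℤ)) - 1‖
        > (2 : ℝ) ^ (-ν') * ((∑ i, M i : ℕ) : ℝ) ^ (-ν') := by
  obtain ⟨ν', hν', hbound⟩ := exists_two_rpow_neg_mul_rpow_neg_lt hc ν
  refine ⟨ν', hν', fun M hM => ?_⟩
  have hN : (1 : ℝ) ≤ (∑ i, M i : ℕ) := by
    obtain ⟨i, hi⟩ := Function.ne_iff.mp hM
    exact_mod_cast (Nat.one_le_iff_ne_zero.mpr hi).trans
      (Finset.single_le_sum (fun j _ => Nat.zero_le (M j)) (Finset.mem_univ i))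
  set w := (∑ i, (M i : ℂ) * α i) * τ
  have hprod (k : ℤ) : ∏ i, Complex.exp (α i * τ) ^ (k * M i) = Complex.exp (k * w) := by
    rw [Complex.prod_exp_zpow]
    congr 1
    simp only [w, Finset.sum_mul, Finset.mul_sum]
    push_cast
    exact Finset.sum_congr rfl fun i _ => by ring
  have hpos : ∏ i, Complex.exp (α i * τ) ^ M i = Complex.exp w := by simpa using hprod 1
  have hneg : ∏ i, Complex.exp (α i * τ) ^ (-(M i : ℤ)) = Complex.exp (-w) := by
    simpa using hprod (-1)
  have hδ : 0 < min (c * ((∑ i, M i : ℕ) : ℝ) ^ (-ν)) 1 :=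
    lt_min (by positivity) one_pos
  have hw (m : ℤ) : min (c * ((∑ i, M i : ℕ) : ℝ) ^ (-ν)) 1 < ‖w - 2 * π * m * Complex.I‖ :=
    (min_le_left _ _).trans_lt (h M hM m)
  rw [hpos, hneg]
  exact ⟨(hbound _ hN).trans (Complex.div_sixteen_lt_norm_exp_sub_one hδ (min_le_right _ _) hw),
    (hbound _ hN).trans (Complex.div_sixteen_lt_norm_exp_neg_sub_one hδ (min_le_right _ _) hw)⟩

/-- Lemma 1 of the paper, third estimate (with `a = q^λ`, so the
logarithms cancel): lower bounds for `|q^m − 1|` and `|q^{−m} − 1|`. -/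
theorem stmt2 (s : ℕ) (hs : 1 ≤ s) (q : ℂ) (hq : q ≠ 0) (τ : ℂ) (hτ : Complex.exp τ = q)
    (α : Fin s → ℂ)
    (c ν : ℝ) (hc : 0 < c) (hν : 0 < ν)
    (h : ∀ M : Fin s → ℕ, M ≠ 0 → ∀ m : ℤ,
      ‖(∑ i, (M i : ℂ) * α i) * τ - 2 * (Real.pi : ℂ) * (m : ℂ) * Complex.I‖
        > c * ((∑ i, M i : ℕ) : ℝ) ^ (-ν)) :
    ∃ ν' > (0 : ℝ), ∀ M : Fin s → ℕ, M ≠ 0 →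
      ‖∏ i, Complex.exp (α i * τ) ^ M i - 1‖
        > (2 : ℝ) ^ (-ν') * ((∑ i, M i : ℕ) : ℝ) ^ (-ν') ∧
      ‖∏ i, Complex.exp (α i * τ) ^ (-(M i : ℤ)) - 1‖
        > (2 : ℝ) ^ (-ν') * ((∑ i, M i : ℕ) : ℝ) ^ (-ν') :=
  stmt2_general s τ α c ν hc h
end

section
/- Assume condition (M) with exponent ν > 0 holds, and let a be a nonzero complex number with Λq^m ≠ a for every multi-index m. Then for all multi-indices m > p one has min(ε_m(a), ε_p(a)) < (2^{ν+1}/|a|)·(|m|−|p|)^ν. -/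
/-!
Write `d = m - p` and `Q = q^d`, so that `Λ q^m - a = Q (Λ q^p) - a`. The identities
`a (Q - 1) = (Λ q^m - a) - Q (Λ q^p - a)` and `a (Q⁻¹ - 1) = (Λ q^p - a) - Q⁻¹ (Λ q^m - a)`,
used for `‖Q‖ ≤ 1` and `‖Q‖ ≥ 1` respectively, bound `|a|` times the small-divisor quantity of
condition (M) at `d` by `2 max(|Λ q^m - a|, |Λ q^p - a|)`; inverting gives the estimate.
-/

/-- `ε_m(a) = 1/|Λ q^m − a|`. -/
noncomputable def eps (s : ℕ) (Λ : ℂ) (q : Fin s → ℂ) (a : ℂ) (m : Fin s → ℕ) : ℝ :=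
  1 / ‖Λ * ∏ i, q i ^ m i - a‖

section NormedField

variable {𝕜 : Type*} [NormedField 𝕜]

lemma norm_mul_norm_sub_one_le_of_norm_le_one (u Q a : 𝕜) (hQ : ‖Q‖ ≤ 1) :
    ‖a‖ * ‖Q - 1‖ ≤ 2 * max ‖u * Q - a‖ ‖u - a‖ := by
  have hA := le_max_left ‖u * Q - a‖ ‖u - a‖
  have hB := le_max_right ‖u * Q - a‖ ‖u - a‖
  calc ‖a‖ * ‖Q - 1‖ = ‖(u * Q - a) - Q * (u - a)‖ := by rw [← norm_mul]; congr 1; ring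
    _ ≤ ‖u * Q - a‖ + ‖Q‖ * ‖u - a‖ := by rw [← norm_mul]; exact norm_sub_le _ _
    _ ≤ 2 * max ‖u * Q - a‖ ‖u - a‖ := by nlinarith [norm_nonneg Q, norm_nonneg (u - a)]

lemma norm_mul_min_norm_sub_one_le (u Q a : 𝕜) :
    ‖a‖ * min ‖Q - 1‖ ‖Q⁻¹ - 1‖ ≤ 2 * max ‖u * Q - a‖ ‖u - a‖ := by
  rcases le_total ‖Q‖ 1 with hQ | hQ
  · exact (mul_le_mul_of_nonneg_left (min_le_left _ _) (norm_nonneg a)).trans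
      (norm_mul_norm_sub_one_le_of_norm_le_one u Q a hQ)
  · have hQ0 : Q ≠ 0 := norm_pos_iff.mp (zero_lt_one.trans_le hQ)
    have hQinv : ‖Q⁻¹‖ ≤ 1 := by rw [norm_inv]; exact inv_le_one_of_one_le₀ hQ
    have h := norm_mul_norm_sub_one_le_of_norm_le_one (u * Q) Q⁻¹ a hQinv
    rw [mul_inv_cancel_right₀ hQ0, max_comm] at h
    exact (mul_le_mul_of_nonneg_left (min_le_right _ _) (norm_nonneg a)).trans h

end NormedField

section MultiIndex

variable {ι : Type*} [Fintype ι]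

lemma Finset.prod_pow_eq_prod_pow_mul_prod_pow_sub {M : Type*} [CommMonoid M] (q : ι → M)
    {m p : ι → ℕ} (hpm : p ≤ m) :
    ∏ i, q i ^ m i = (∏ i, q i ^ p i) * ∏ i, q i ^ (m - p) i := by
  rw [← Finset.prod_mul_distrib]
  refine Finset.prod_congr rfl fun i _ => ?_
  rw [← pow_add, Pi.sub_apply, Nat.add_sub_cancel' (hpm i)]

lemma Finset.prod_zpow_neg_natCast {G : Type*} [DivisionCommMonoid G] (q : ι → G) (d : ι → ℕ) :
    ∏ i, q i ^ (-(d i : ℤ)) = (∏ i, q i ^ d i)⁻¹ := by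
  simp only [zpow_neg, zpow_natCast, Finset.prod_inv_distrib]

end MultiIndex

lemma min_one_div_le_one_div_max (x y : ℝ) : min (1 / x) (1 / y) ≤ 1 / max x y := by
  rcases max_choice x y with h | h <;> rw [h]
  exacts [min_le_left _ _, min_le_right _ _]

lemma one_div_lt_two_mul_rpow_div_of_mul_rpow_neg_lt {α M t ν : ℝ} (hα : 0 < α) (ht : 0 < t)
    (h : α * t ^ (-ν) < 2 * M) : 1 / M < 2 * t ^ ν / α := by
  have htν : 0 < t ^ ν := Real.rpow_pos_of_pos ht ν
  rw [Real.rpow_neg ht.le, ← div_eq_mul_inv, div_lt_iff₀ htν] at h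
  have hM : 0 < M := by nlinarith
  rw [div_lt_div_iff₀ hM hα]
  linarith

theorem stmt3_general (s : ℕ) (Λ : ℂ) (q : Fin s → ℂ)
    (ν : ℝ)
    (hM : ∀ m : Fin s → ℕ, m ≠ 0 →
      ‖∏ i, q i ^ m i - 1‖ > (2 : ℝ) ^ (-ν) * ((∑ i, m i : ℕ) : ℝ) ^ (-ν) ∧
      ‖∏ i, q i ^ (-(m i : ℤ)) - 1‖ > (2 : ℝ) ^ (-ν) * ((∑ i, m i : ℕ) : ℝ) ^ (-ν))
    (a : ℂ) (ha : a ≠ 0) :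
    ∀ m p : Fin s → ℕ, (∀ i, p i ≤ m i) → (∑ i, p i) < (∑ i, m i) →
      min (eps s Λ q a m) (eps s Λ q a p) <
        (2 : ℝ) ^ (ν + 1) / ‖a‖ *
          (((∑ i, m i : ℕ) : ℝ) - ((∑ i, p i : ℕ) : ℝ)) ^ ν := by
  intro m p hpm hlt
  have hsum : ∑ i, (m - p) i = ∑ i, m i - ∑ i, p i :=
    Finset.sum_tsub_distrib _ fun i _ => hpm i
  have hd : m - p ≠ 0 := fun h => by
    simp only [h, Pi.zero_apply, Finset.sum_const_zero] at hsum; omega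
  set n := ((∑ i, m i : ℕ) : ℝ) - ((∑ i, p i : ℕ) : ℝ)
  have hn : 0 < n := sub_pos.2 (Nat.cast_lt.2 hlt)
  obtain ⟨hsmall, hsmall_inv⟩ := hM (m - p) hd
  rw [Finset.prod_zpow_neg_natCast] at hsmall_inv
  rw [hsum, Nat.cast_sub hlt.le, ← Real.mul_rpow zero_le_two hn.le] at hsmall hsmall_inv
  have hkey := norm_mul_min_norm_sub_one_le (Λ * ∏ i, q i ^ p i) (∏ i, q i ^ (m - p) i) a
  rw [mul_assoc, ← Finset.prod_pow_eq_prod_pow_mul_prod_pow_sub q hpm] at hkey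
  have hα : 0 < ‖a‖ := norm_pos_iff.2 ha
  have hlower :
      ‖a‖ * (2 * n) ^ (-ν) < 2 * max ‖Λ * ∏ i, q i ^ m i - a‖ ‖Λ * ∏ i, q i ^ p i - a‖ :=
    (mul_lt_mul_of_pos_left (lt_min hsmall hsmall_inv) hα).trans_le hkey
  calc min (eps s Λ q a m) (eps s Λ q a p)
      ≤ 1 / max ‖Λ * ∏ i, q i ^ m i - a‖ ‖Λ * ∏ i, q i ^ p i - a‖ :=
        min_one_div_le_one_div_max _ _
    _ < 2 * (2 * n) ^ ν / ‖a‖ :=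
        one_div_lt_two_mul_rpow_div_of_mul_rpow_neg_lt hα (by positivity) hlower
    _ = 2 ^ (ν + 1) / ‖a‖ * n ^ ν := by
        rw [Real.mul_rpow zero_le_two hn.le, Real.rpow_add_one two_ne_zero]; ring

/-- estimate (21) in the proof of Lemma 3 of the paper. -/
theorem stmt3 (s : ℕ) (hs : 1 ≤ s) (Λ : ℂ) (hΛ : Λ ≠ 0) (q : Fin s → ℂ) (hq : ∀ i, q i ≠ 0)
    (ν : ℝ) (hν : 0 < ν)
    (hM : ∀ m : Fin s → ℕ, m ≠ 0 →
      ‖∏ i, q i ^ m i - 1‖ > (2 : ℝ) ^ (-ν) * ((∑ i, m i : ℕ) : ℝ) ^ (-ν) ∧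
      ‖∏ i, q i ^ (-(m i : ℤ)) - 1‖ > (2 : ℝ) ^ (-ν) * ((∑ i, m i : ℕ) : ℝ) ^ (-ν))
    (a : ℂ) (ha : a ≠ 0) (hne : ∀ m : Fin s → ℕ, Λ * ∏ i, q i ^ m i ≠ a) :
    ∀ m p : Fin s → ℕ, (∀ i, p i ≤ m i) → (∑ i, p i) < (∑ i, m i) →
      min (eps s Λ q a m) (eps s Λ q a p) <
        (2 : ℝ) ^ (ν + 1) / ‖a‖ *
          (((∑ i, m i : ℕ) : ℝ) - ((∑ i, p i : ℕ) : ℝ)) ^ ν :=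
  stmt3_general s Λ q ν hM a ha
end

section
/- Let a be a nonzero complex number, ν > 0, and assume conditions (S1)–(S2) and condition (E) for a with exponent ν hold. Set N₁ = 2^{2ν+1}. Then for every integer r ≥ 0 and every chain of multi-indices m^(0) > m^(1) > ⋯ > m^(r) with m^(r) nonzero, one has ∏_{i=0}^{r} s_{m^(i)}·ε_{m^(i)}(a) < N₁^{r+1}·|m^(0)|^ν·∏_{i=1}^{r} (|m^(i−1)|−|m^(i)|)^ν. -/
/-- `s_m = max(1, |q₁|^{m₁}⋯|q_s|^{m_s})`. -/
noncomputable def smax (s : ℕ) (q : Fin s → ℂ) (m : Fin s → ℕ) : ℝ :=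
  max 1 (∏ i, ‖q i‖ ^ m i)

/-!
Siegel's deletion argument. In a chain `m⁽⁰⁾ > ⋯ > m⁽ʳ⁾`, delete the member `m` with the smallest
`ε_m(a)`. Condition (E), applied to `m` and each of its neighbours, bounds `s_m ε_m(a)` by
`2^{ν+1} min(d₁, d₂)^ν`, where `d₁, d₂` are the two gaps at `m`; since
`min(d₁, d₂) (d₁ + d₂) ≤ 2 d₁ d₂`, this pays for merging the two gaps into one. Induction on the
length reduces to a single multi-index, where (S1) and (S2) give `s_m ε_m(a) < 2^ν |m|^ν`.
-/

namespace List

variable {α : Type*}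

def chainProd (g : α → α → ℝ) : List α → ℝ
  | x :: y :: l => g x y * chainProd g (y :: l)
  | _ => 1

variable {g : α → α → ℝ}

@[simp] lemma chainProd_singleton (x : α) : chainProd g [x] = 1 := rfl

@[simp] lemma chainProd_cons_cons (x y : α) (l : List α) :
    chainProd g (x :: y :: l) = g x y * chainProd g (y :: l) := rfl

lemma chainProd_nonneg :
    ∀ {l : List α}, l.Pairwise (fun x y => 0 ≤ g x y) → 0 ≤ chainProd g l
  | [], _ | [_], _ => zero_le_one
  | _ :: _ :: _, hl => by
    rw [chainProd_cons_cons]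
    exact mul_nonneg (rel_of_pairwise_cons hl mem_cons_self) (chainProd_nonneg hl.of_cons)

lemma chainProd_append_cons (B : List α) (u : α) :
    ∀ A : List α, chainProd g (A ++ u :: B) = chainProd g (A ++ [u]) * chainProd g (u :: B)
  | [] => by simp
  | [x] => by simp
  | x :: y :: A => by
    simp only [cons_append, chainProd_cons_cons, mul_assoc]
    rw [← cons_append, chainProd_append_cons B u (y :: A), cons_append]

lemma chainProd_ofFn : ∀ {r : ℕ} (M : Fin (r + 1) → α),
    chainProd g (ofFn M) = ∏ i : Fin r, g (M i.castSucc) (M i.succ)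
  | 0, _ => by simp
  | r + 1, M => by
    rw [ofFn_succ, ofFn_succ (f := fun i : Fin (r + 1) => M i.succ), chainProd_cons_cons,
      ← ofFn_succ (f := fun i : Fin (r + 1) => M i.succ), chainProd_ofFn, Fin.prod_univ_succ]
    simp only [Fin.succ_castSucc, Fin.castSucc_zero]

end List

section ChainProduct

open List

variable {α : Type*} [Preorder α] {σ F ε : α → ℝ} {K ν : ℝ}

lemma min_mul_rpow_add_le_of_le {a b : ℝ} (hK : 0 ≤ K) (hν : 0 ≤ ν) (ha : 0 ≤ a)
    (hab : a ≤ b) :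
    min (K * a ^ ν) (K * b ^ ν) * (2 ^ ν * K * (a + b) ^ ν) ≤
      (2 ^ ν * K * a ^ ν) * (2 ^ ν * K * b ^ ν) := by
  have hsum : (a + b) ^ ν ≤ 2 ^ ν * b ^ ν := by
    rw [← Real.mul_rpow zero_le_two (ha.trans hab)]
    exact Real.rpow_le_rpow (by linarith) (by linarith) hν
  calc min (K * a ^ ν) (K * b ^ ν) * (2 ^ ν * K * (a + b) ^ ν)
      ≤ K * a ^ ν * (2 ^ ν * K * (2 ^ ν * b ^ ν)) :=
        mul_le_mul (min_le_left _ _) (by gcongr)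
          (mul_nonneg (by positivity) (Real.rpow_nonneg (by linarith) ν))
          (mul_nonneg hK (Real.rpow_nonneg ha ν))
    _ = (2 ^ ν * K * a ^ ν) * (2 ^ ν * K * b ^ ν) := by ring

lemma min_mul_rpow_add_le {a b : ℝ} (hK : 0 ≤ K) (hν : 0 ≤ ν) (ha : 0 ≤ a) (hb : 0 ≤ b) :
    min (K * a ^ ν) (K * b ^ ν) * (2 ^ ν * K * (a + b) ^ ν) ≤
      (2 ^ ν * K * a ^ ν) * (2 ^ ν * K * b ^ ν) := by
  rcases le_total a b with hab | hba
  · exact min_mul_rpow_add_le_of_le hK hν ha hab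
  · rw [min_comm, add_comm, mul_comm (2 ^ ν * K * a ^ ν)]
    exact min_mul_rpow_add_le_of_le hK hν hb hba

variable (σ K ν) in
/-- With `K = 2^{ν+1}` this is the factor `N₁ (|m| - |p|)^ν` of the statement. -/
noncomputable abbrev siegelGap (x y : α) : ℝ := 2 ^ ν * K * (σ x - σ y) ^ ν

lemma chainProd_siegelGap_nonneg (hσ : Monotone σ) (hK : 0 ≤ K) {l : List α}
    (hl : l.Pairwise (· > ·)) : 0 ≤ chainProd (siegelGap σ K ν) l :=
  chainProd_nonneg <| hl.imp fun hxy =>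
    mul_nonneg (by positivity) (Real.rpow_nonneg (sub_nonneg.2 (hσ hxy.le)) ν)

lemma siegelGap_ge (hσ : Monotone σ) (hK : 0 ≤ K) (hν : 0 ≤ ν) {x y : α} (hxy : y < x) :
    K * (σ x - σ y) ^ ν ≤ siegelGap σ K ν x y := by
  rw [siegelGap, mul_assoc]
  exact le_mul_of_one_le_left (mul_nonneg hK (Real.rpow_nonneg (sub_nonneg.2 (hσ hxy.le)) ν))
    (Real.one_le_rpow one_le_two hν)

lemma exists_lt_mul_chainProd_le (hσ : Monotone σ) (hK : 0 ≤ K) (hν : 0 ≤ ν)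
    (hgap : ∀ x y, y < x → ε x ≤ ε y → F x < K * (σ x - σ y) ^ ν)
    (hgap' : ∀ x y, y < x → ε y ≤ ε x → F y < K * (σ x - σ y) ^ ν)
    {A B : List α} {z : α} (hl : (A ++ z :: B).Pairwise (· > ·))
    (hz : ∀ w ∈ A ++ z :: B, ε z ≤ ε w) (hAB : A ++ B ≠ []) :
    ∃ c, F z < c ∧ c * chainProd (siegelGap σ K ν) (A ++ B) ≤
      chainProd (siegelGap σ K ν) (A ++ z :: B) := by
  rcases A.eq_nil_or_concat' with rfl | ⟨A, u, rfl⟩ <;> rcases B with _ | ⟨v, B⟩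
  · simp at hAB
  · have hzv : v < z := rel_of_pairwise_cons hl mem_cons_self
    refine ⟨K * (σ z - σ v) ^ ν, hgap z v hzv (hz v (by simp)), ?_⟩
    exact mul_le_mul_of_nonneg_right (siegelGap_ge hσ hK hν hzv)
      (chainProd_siegelGap_nonneg hσ hK hl.of_cons)
  · have huz : z < u := (pairwise_append.1 hl).2.2 u (by simp) z mem_cons_self
    refine ⟨K * (σ u - σ z) ^ ν, hgap' u z huz (hz u (by simp)), ?_⟩
    rw [append_nil, append_assoc, singleton_append, chainProd_append_cons [z] u A,
      chainProd_cons_cons, chainProd_singleton, mul_one, mul_comm]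
    exact mul_le_mul_of_nonneg_left (siegelGap_ge hσ hK hν huz)
      (chainProd_siegelGap_nonneg hσ hK (hl.sublist (sublist_append_left _ _)))
  · have huz : z < u := (pairwise_append.1 hl).2.2 u (by simp) z mem_cons_self
    have hzvB := (pairwise_append.1 hl).2.1
    have hzv : v < z := rel_of_pairwise_cons hzvB mem_cons_self
    have hP := chainProd_siegelGap_nonneg (ν := ν) hσ hK (hl.sublist (sublist_append_left _ _))
    have hQ := chainProd_siegelGap_nonneg (ν := ν) hσ hK hzvB.of_cons
    have key := min_mul_rpow_add_le hK hν (sub_nonneg.2 (hσ huz.le)) (sub_nonneg.2 (hσ hzv.le))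
    rw [sub_add_sub_cancel] at key
    refine ⟨min (K * (σ u - σ z) ^ ν) (K * (σ z - σ v) ^ ν),
      lt_min (hgap' u z huz (hz u (by simp))) (hgap z v hzv (hz v (by simp))), ?_⟩
    simp only [append_assoc, singleton_append]
    rw [chainProd_append_cons _ u A, chainProd_append_cons (z :: v :: B) u A]
    simp only [chainProd_cons_cons]
    calc _ = chainProd _ (A ++ [u]) * chainProd _ (v :: B) *
          (min (K * (σ u - σ z) ^ ν) (K * (σ z - σ v) ^ ν) * siegelGap σ K ν u v) := by ring
      _ ≤ chainProd _ (A ++ [u]) * chainProd _ (v :: B) *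
          (siegelGap σ K ν u z * siegelGap σ K ν z v) :=
        mul_le_mul_of_nonneg_left key (mul_nonneg hP hQ)
      _ = _ := by ring

theorem prod_map_lt_mul_chainProd (hσ : Monotone σ) (hF : ∀ x, 0 ≤ F x) (hK : 0 ≤ K)
    (hν : 0 ≤ ν)
    (hgap : ∀ x y, y < x → ε x ≤ ε y → F x < K * (σ x - σ y) ^ ν)
    (hgap' : ∀ x y, y < x → ε y ≤ ε x → F y < K * (σ x - σ y) ^ ν)
    {B : ℝ} {l : List α} (hne : l ≠ []) (hl : l.Pairwise (· > ·))
    (hB : ∀ x ∈ l, F x < B) :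
    (l.map F).prod < B * chainProd (siegelGap σ K ν) l := by
  induction hn : l.length using Nat.strong_induction_on generalizing l with
  | _ n ih =>
  classical
  obtain ⟨z, hzl, hz⟩ : ∃ z ∈ l, ∀ w ∈ l, ε z ≤ ε w := by
    simpa using l.toFinset.exists_min_image ε (by simpa using hne)
  obtain ⟨A, C, rfl⟩ := append_of_mem hzl
  have hB0 : 0 ≤ B := (hF z).trans (hB z hzl).le
  by_cases hAC : A ++ C = []
  · obtain ⟨rfl, rfl⟩ := append_eq_nil_iff.1 hAC
    simpa using hB z hzl
  obtain ⟨c, hzc, hc⟩ := exists_lt_mul_chainProd_le hσ hK hν hgap hgap' hl hz hAC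
  have hsub : (A ++ C).Sublist (A ++ z :: C) := (sublist_cons_self z C).append_left A
  have ihAC := ih (A ++ C).length (by simp [← hn]) hAC (hl.sublist hsub)
    (fun x hx => hB x (hsub.subset hx)) rfl
  calc ((A ++ z :: C).map F).prod = F z * ((A ++ C).map F).prod := by
        simp only [map_append, map_cons, prod_append, prod_cons]; ring
    _ < c * (B * chainProd (siegelGap σ K ν) (A ++ C)) :=
        mul_lt_mul'' hzc ihAC (hF z) (prod_nonneg fun x hx => by
          obtain ⟨y, -, rfl⟩ := mem_map.1 hx; exact hF y)
    _ = B * (c * chainProd (siegelGap σ K ν) (A ++ C)) := by ring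
    _ ≤ B * chainProd (siegelGap σ K ν) (A ++ z :: C) := mul_le_mul_of_nonneg_left hc hB0

end ChainProduct

section Siegel

variable {s : ℕ} {Λ a : ℂ} {q : Fin s → ℂ}

lemma norm_mul_prod_pow_sub (hq : ∀ i, q i ≠ 0) (m : Fin s → ℕ) :
    ‖Λ * ∏ i, q i ^ m i - a‖ = ‖a * ∏ i, q i ^ (-(m i : ℤ)) - Λ‖ * ∏ i, ‖q i‖ ^ m i := by
  have hP : ∏ i, q i ^ m i ≠ 0 := Finset.prod_ne_zero_iff.2 fun i _ => pow_ne_zero _ (hq i)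
  have hinv : ∏ i, q i ^ (-(m i : ℤ)) = (∏ i, q i ^ m i)⁻¹ := by
    simp [zpow_neg, Finset.prod_inv_distrib]
  simp only [hinv, ← norm_pow, ← norm_prod, ← norm_mul]
  rw [← norm_neg]
  congr 1
  field_simp
  ring

lemma smax_mul_eps_nonneg (m : Fin s → ℕ) : 0 ≤ smax s q m * eps s Λ q a m :=
  mul_nonneg (zero_le_one.trans (le_max_left _ _)) (by unfold eps; positivity)

lemma smax_mul_eps_lt (hq : ∀ i, q i ≠ 0) {ν : ℝ} {m : Fin s → ℕ} (hm : m ≠ 0)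
    (hS1 : ‖Λ * ∏ i, q i ^ m i - a‖ > (2 : ℝ) ^ (-ν) * ((∑ i, m i : ℕ) : ℝ) ^ (-ν))
    (hS2 : ‖a * ∏ i, q i ^ (-(m i : ℤ)) - Λ‖ > (2 : ℝ) ^ (-ν) * ((∑ i, m i : ℕ) : ℝ) ^ (-ν)) :
    smax s q m * eps s Λ q a m < 2 ^ ν * ((∑ i, m i : ℕ) : ℝ) ^ ν := by
  have hsum : (0 : ℝ) < ((∑ i, m i : ℕ) : ℝ) := Nat.cast_pos.2 <| Nat.pos_of_ne_zero fun h =>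
    hm <| funext fun i => Finset.sum_eq_zero_iff.1 h i (Finset.mem_univ i)
  have one_div_lt : ∀ {D : ℝ}, (2 : ℝ) ^ (-ν) * ((∑ i, m i : ℕ) : ℝ) ^ (-ν) < D →
      1 / D < 2 ^ ν * ((∑ i, m i : ℕ) : ℝ) ^ ν := fun h => by
    rw [Real.rpow_neg zero_le_two, Real.rpow_neg hsum.le, ← mul_inv] at h
    simpa using one_div_lt_one_div_of_lt (by positivity) h
  have hQ : 0 < ∏ i, ‖q i‖ ^ m i := Finset.prod_pos fun i _ => pow_pos (norm_pos_iff.2 (hq i)) _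
  have hQeps :
      (∏ i, ‖q i‖ ^ m i) * eps s Λ q a m = 1 / ‖a * ∏ i, q i ^ (-(m i : ℤ)) - Λ‖ := by
    rw [eps, norm_mul_prod_pow_sub hq]
    field_simp
  rw [smax, max_mul_of_nonneg _ _ (by unfold eps; positivity), one_mul, hQeps]
  exact max_lt (one_div_lt hS1) (one_div_lt hS2)

end Siegel

lemma rpow_mul_prod_le {ν x : ℝ} (hν : 0 ≤ ν) (hx : 0 ≤ x) {r : ℕ} {d : Fin r → ℝ}
    (hd : ∀ i, 0 ≤ d i) :
    2 ^ ν * x * ∏ i, (2 ^ ν * 2 ^ (ν + 1) * d i) ≤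
      ((2 : ℝ) ^ (2 * ν + 1)) ^ (r + 1) * x * ∏ i, d i := by
  have h2 : (2 : ℝ) ^ ν * 2 ^ (ν + 1) = 2 ^ (2 * ν + 1) := by
    rw [← Real.rpow_add zero_lt_two]; ring_nf
  have hle : (2 : ℝ) ^ ν ≤ 2 ^ (2 * ν + 1) :=
    Real.rpow_le_rpow_of_exponent_le one_le_two (by linarith)
  have : 0 ≤ ∏ i, d i := Finset.prod_nonneg fun i _ => hd i
  rw [h2, Finset.prod_mul_distrib, Finset.prod_const, Finset.card_univ, Fintype.card_fin]
  calc 2 ^ ν * x * (((2 : ℝ) ^ (2 * ν + 1)) ^ r * ∏ i, d i)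
      ≤ 2 ^ (2 * ν + 1) * x * (((2 : ℝ) ^ (2 * ν + 1)) ^ r * ∏ i, d i) := by gcongr
    _ = _ := by ring

theorem stmt7_general (s : ℕ) (Λ : ℂ) (q : Fin s → ℂ) (hq : ∀ i, q i ≠ 0)
    (a : ℂ) (ν : ℝ) (hν : 0 < ν)
    (hS1 : ∀ m : Fin s → ℕ, m ≠ 0 →
      ‖Λ * ∏ i, q i ^ m i - a‖ > (2 : ℝ) ^ (-ν) * ((∑ i, m i : ℕ) : ℝ) ^ (-ν))
    (hS2 : ∀ m : Fin s → ℕ, m ≠ 0 →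
      ‖a * ∏ i, q i ^ (-(m i : ℤ)) - Λ‖ > (2 : ℝ) ^ (-ν) * ((∑ i, m i : ℕ) : ℝ) ^ (-ν))
    (hE : ∀ m p : Fin s → ℕ, (∀ i, p i ≤ m i) → (∑ i, p i) < (∑ i, m i) →
      smax s q m * min (eps s Λ q a m) (eps s Λ q a p) <
        (2 : ℝ) ^ (ν + 1) * (((∑ i, m i : ℕ) : ℝ) - ((∑ i, p i : ℕ) : ℝ)) ^ ν ∧
      smax s q p * min (eps s Λ q a m) (eps s Λ q a p) <
        (2 : ℝ) ^ (ν + 1) * (((∑ i, m i : ℕ) : ℝ) - ((∑ i, p i : ℕ) : ℝ)) ^ ν)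
    (N₁ : ℝ) (hN₁ : N₁ = (2 : ℝ) ^ (2 * ν + 1)) :
    ∀ (r : ℕ) (M : Fin (r + 1) → Fin s → ℕ),
      (∀ i : Fin r, (∀ j, M i.succ j ≤ M i.castSucc j) ∧
        (∑ j, M i.succ j) < (∑ j, M i.castSucc j)) →
      M (Fin.last r) ≠ 0 →
      ∏ i, smax s q (M i) * eps s Λ q a (M i) <
        N₁ ^ (r + 1) * ((∑ j, M 0 j : ℕ) : ℝ) ^ ν *
          ∏ i : Fin r, (((∑ j, M i.castSucc j : ℕ) : ℝ) - ((∑ j, M i.succ j : ℕ) : ℝ)) ^ ν := by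
  intro r M hchain hlast
  have hσ : Monotone fun m : Fin s → ℕ => ((∑ i, m i : ℕ) : ℝ) :=
    Nat.mono_cast.comp Fintype.sum_mono
  have hM : StrictAnti M := Fin.strictAnti_iff_succ_lt.2 fun i =>
    lt_of_le_of_ne (hchain i).1 fun h => (hchain i).2.ne (by rw [h])
  have hM0 : ∀ i, M i ≠ 0 := fun i h =>
    hlast <| le_antisymm (h ▸ hM.antitone (Fin.le_last i)) fun _ => Nat.zero_le _
  have key := prod_map_lt_mul_chainProd (K := 2 ^ (ν + 1)) (ε := eps s Λ q a) hσ
    smax_mul_eps_nonneg (by positivity) hν.le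
    (fun m p hpm hε => min_eq_left hε ▸ (hE m p hpm.le (Fintype.sum_strictMono hpm)).1)
    (fun m p hpm hε => min_eq_right hε ▸ (hE m p hpm.le (Fintype.sum_strictMono hpm)).2)
    (B := 2 ^ ν * ((∑ j, M 0 j : ℕ) : ℝ) ^ ν) (l := List.ofFn M) (by simp)
    (List.pairwise_ofFn.2 hM) fun x hx => by
      obtain ⟨i, rfl⟩ := List.mem_ofFn.1 hx
      refine (smax_mul_eps_lt hq (hM0 i) (hS1 _ (hM0 i)) (hS2 _ (hM0 i))).trans_le ?_
      gcongr 2 ^ ν * ?_ ^ ν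
      exact hσ (hM.antitone (Fin.zero_le i))
  rw [List.map_ofFn, List.prod_ofFn, List.chainProd_ofFn] at key
  subst hN₁
  exact key.trans_le <| rpow_mul_prod_le hν.le (by positivity) fun i =>
    Real.rpow_nonneg (sub_nonneg.2 (hσ (hM.antitone Fin.castSucc_lt_succ.le))) ν

/-- Lemma 4 of the paper, an analogue of Siegel's Lemma 2. -/
theorem stmt7 (s : ℕ) (hs : 1 ≤ s) (Λ : ℂ) (hΛ : Λ ≠ 0) (q : Fin s → ℂ) (hq : ∀ i, q i ≠ 0)
    (a : ℂ) (ha : a ≠ 0) (ν : ℝ) (hν : 0 < ν)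
    (hS1 : ∀ m : Fin s → ℕ, m ≠ 0 →
      ‖Λ * ∏ i, q i ^ m i - a‖ > (2 : ℝ) ^ (-ν) * ((∑ i, m i : ℕ) : ℝ) ^ (-ν))
    (hS2 : ∀ m : Fin s → ℕ, m ≠ 0 →
      ‖a * ∏ i, q i ^ (-(m i : ℤ)) - Λ‖ > (2 : ℝ) ^ (-ν) * ((∑ i, m i : ℕ) : ℝ) ^ (-ν))
    (hE : ∀ m p : Fin s → ℕ, (∀ i, p i ≤ m i) → (∑ i, p i) < (∑ i, m i) →
      smax s q m * min (eps s Λ q a m) (eps s Λ q a p) <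
        (2 : ℝ) ^ (ν + 1) * (((∑ i, m i : ℕ) : ℝ) - ((∑ i, p i : ℕ) : ℝ)) ^ ν ∧
      smax s q p * min (eps s Λ q a m) (eps s Λ q a p) <
        (2 : ℝ) ^ (ν + 1) * (((∑ i, m i : ℕ) : ℝ) - ((∑ i, p i : ℕ) : ℝ)) ^ ν)
    (N₁ : ℝ) (hN₁ : N₁ = (2 : ℝ) ^ (2 * ν + 1)) :
    ∀ (r : ℕ) (M : Fin (r + 1) → Fin s → ℕ),
      (∀ i : Fin r, (∀ j, M i.succ j ≤ M i.castSucc j) ∧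
        (∑ j, M i.succ j) < (∑ j, M i.castSucc j)) →
      M (Fin.last r) ≠ 0 →
      ∏ i, smax s q (M i) * eps s Λ q a (M i) <
        N₁ ^ (r + 1) * ((∑ j, M 0 j : ℕ) : ℝ) ^ ν *
          ∏ i : Fin r, (((∑ j, M i.castSucc j : ℕ) : ℝ) - ((∑ j, M i.succ j : ℕ) : ℝ)) ^ ν :=
  stmt7_general s Λ q hq a ν hν hS1 hS2 hE N₁ hN₁
end

section
/- Let L be a complex polynomial with L(Λq^m) ≠ 0 for every nonzero multi-index m, set ε_m = 1/|L(Λq^m)|, let n ≥ 1, and define δ_m recursively from this ε and n as in the context. Let 0 < ν̃ ≤ 1 be such that ν̃·ε_m ≤ 1 for every multi-index m with |m| = 1. Suppose the family of complex numbers (c_m) satisfies the reduced-equation recursion (R1) for L and a finitely supported coefficient family (A_{k,p}), and the family of nonnegative real numbers (C_m) satisfies the majorant recursion (R2) with this ν̃ and the same coefficients. Then |c_m| ≤ δ_m·C_m for every nonzero multi-index m. -/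
/-- Sum of `∏ t, g(f t)` over all ordered `p`-tuples `f` of nonzero multi-indices
with `f 0 + ⋯ + f (p-1) = l`. For `p = 0` it equals `1` if `l = 0` and `0` otherwise. -/
noncomputable def tupleSumC (s : ℕ) (g : (Fin s → ℕ) → ℂ) (p : ℕ) (l : Fin s → ℕ) : ℂ :=
  ∑ᶠ f ∈ {f : Fin p → Fin s → ℕ | (∀ t, f t ≠ 0) ∧ (∑ t, f t) = l}, ∏ t, g (f t)

/-- Real version of `tupleSumC` (the quantity `S(l,p)` of the majorant recursion). -/
noncomputable def tupleSumR (s : ℕ) (C : (Fin s → ℕ) → ℝ) (p : ℕ) (l : Fin s → ℕ) : ℝ :=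
  ∑ᶠ f ∈ {f : Fin p → Fin s → ℕ | (∀ t, f t ≠ 0) ∧ (∑ t, f t) = l}, ∏ t, C (f t)

/-- The reduced-equation recursion (R1):
`L(Λq^m)·c_m = Σ_{0<k≤m} Σ_p A_{k,p} Σ_{l⁽⁰⁾+⋯+l⁽ⁿ⁾=m−k} ∏_j P_j(l⁽ʲ⁾, p_j)`,
where `P_j(l,p)` is the sum of `(q^{jλ⁽¹⁾}c_{λ⁽¹⁾})⋯(q^{jλ⁽ᵖ⁾}c_{λ⁽ᵖ⁾})` over ordered
`p`-tuples of nonzero multi-indices summing to `l`. -/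
def ReducedRec (s n : ℕ) (L : Polynomial ℂ) (Λ : ℂ) (q : Fin s → ℂ)
    (A : (Fin s → ℕ) → (Fin (n + 1) → ℕ) → ℂ) (c : (Fin s → ℕ) → ℂ) : Prop :=
  ∀ m : Fin s → ℕ, m ≠ 0 →
    Polynomial.eval (Λ * ∏ i, q i ^ m i) L * c m =
      ∑ᶠ k ∈ {k : Fin s → ℕ | k ≠ 0 ∧ k ≤ m},
        ∑ᶠ p : Fin (n + 1) → ℕ,
          A k p *
            ∑ᶠ ls ∈ {ls : Fin (n + 1) → Fin s → ℕ | (∑ j, ls j) = m - k},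
              ∏ j, tupleSumC s (fun lam => (∏ i, q i ^ (j.1 * lam i)) * c lam) (p j) (ls j)

/-- The majorant recursion (R2):
`ν̃·C_m = Σ_{0<k≤m} Σ_p |A_{k,p}| Σ_{l⁽⁰⁾+⋯+l⁽ⁿ⁾=m−k} ∏_j S(l⁽ʲ⁾, p_j)`. -/
def MajorantRec (s n : ℕ) (ν' : ℝ) (A : (Fin s → ℕ) → (Fin (n + 1) → ℕ) → ℂ)
    (C : (Fin s → ℕ) → ℝ) : Prop :=
  ∀ m : Fin s → ℕ, m ≠ 0 →
    ν' * C m =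
      ∑ᶠ k ∈ {k : Fin s → ℕ | k ≠ 0 ∧ k ≤ m},
        ∑ᶠ p : Fin (n + 1) → ℕ,
          ‖A k p‖ *
            ∑ᶠ ls ∈ {ls : Fin (n + 1) → Fin s → ℕ | (∑ j, ls j) = m - k},
              ∏ j, tupleSumR s C (p j) (ls j)

open Finset

section MultiIndex

variable {s : ℕ}

lemma one_le_sum_of_ne_zero {m : Fin s → ℕ} (hm : m ≠ 0) : 1 ≤ ∑ i, m i :=
  Nat.one_le_iff_ne_zero.2 fun h => hm (funext fun i => sum_eq_zero_iff.1 h i (mem_univ i))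

lemma tsub_lt_self_of_le {m k : Fin s → ℕ} (hk : k ≠ 0) (hkm : k ≤ m) : m - k < m := by
  refine tsub_le_self.lt_of_ne fun h => hk (funext fun i => ?_)
  have h1 : m i - k i = m i := congrFun h i
  have h2 : k i ≤ m i := hkm i
  rw [Pi.zero_apply]
  omega

lemma le_of_sum_eq {ι : Type*} [Fintype ι] {f : ι → Fin s → ℕ} {l : Fin s → ℕ}
    (hf : ∑ t, f t = l) (t : ι) : f t ≤ l :=
  hf ▸ single_le_sum (fun _ _ => zero_le) (mem_univ t)

lemma finite_setOf_sum_eq (ι : Type*) [Fintype ι] (l : Fin s → ℕ) :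
    {f : ι → Fin s → ℕ | ∑ t, f t = l}.Finite :=
  (Set.Finite.pi fun _ => Set.finite_Iic l).subset fun _ hf t _ => le_of_sum_eq hf t

lemma sum_sigma_single_one (k : Fin s → ℕ) :
    ∑ x : (Σ i, Fin (k i)), (Pi.single x.1 1 : Fin s → ℕ) = k := by
  simp only [Fintype.sum_sigma, sum_const, card_univ, Fintype.card_fin, ← Pi.single_smul,
    smul_eq_mul, mul_one, univ_sum_single]

end MultiIndex

section SplitProducts

variable {s : ℕ} {w : (Fin s → ℕ) → ℝ}

variable (w) in
/-- For the weight `w y = s_y ^ n * δ_y`, `μ_m` is the greatest element of this set. -/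
def splitProducts (m : Fin s → ℕ) : Set ℝ :=
  {x | ∃ l : List (Fin s → ℕ), 2 ≤ l.length ∧ (∀ y ∈ l, y ≠ 0) ∧ l.sum = m ∧ (l.map w).prod = x}

lemma prod_mem_splitProducts {ι : Type*} [Fintype ι] {G : ι → Fin s → ℕ}
    (hcard : 2 ≤ Fintype.card ι) (hG : ∀ x, G x ≠ 0) :
    ∏ x, w (G x) ∈ splitProducts w (∑ x, G x) :=
  ⟨univ.toList.map G, by simpa using hcard, by simpa using hG, sum_map_toList _ _,
    by rw [List.map_map]; exact prod_map_toList _ _⟩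

lemma one_le_prod_single (hw1 : ∀ i, 1 ≤ w (Pi.single i 1)) (k : Fin s → ℕ) :
    1 ≤ ∏ x : (Σ i, Fin (k i)), w (Pi.single x.1 1) :=
  one_le_prod fun x _ => hw1 x.1

lemma prod_mul_prod_single_le {m : Fin s → ℕ} (hm : 1 < ∑ i, m i) {M : ℝ}
    (hM : IsGreatest (splitProducts w m) M) {ι : Type*} [Fintype ι] {G : ι → Fin s → ℕ}
    (hG : ∀ x, G x ≠ 0) {k : Fin s → ℕ} (hk : k ≠ 0) (hsum : ∑ x, G x + k = m) :
    (∏ x, w (G x)) * ∏ x : (Σ i, Fin (k i)), w (Pi.single x.1 1) ≤ M := by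
  let H : ι ⊕ (Σ i, Fin (k i)) → Fin s → ℕ := Sum.elim G fun x => Pi.single x.1 1
  have hH : ∀ x, H x ≠ 0 := by
    rintro (x | x)
    exacts [hG x, Pi.single_ne_zero_iff.2 one_ne_zero]
  have hcard : 2 ≤ Fintype.card (ι ⊕ Σ i, Fin (k i)) := by
    rw [Fintype.card_sum, Fintype.card_sigma]
    simp only [Fintype.card_fin]
    rcases (Fintype.card ι).eq_zero_or_pos with h0 | h0
    · have : IsEmpty ι := Fintype.card_eq_zero_iff.1 h0
      simp only [univ_eq_empty, sum_empty, zero_add] at hsum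
      subst hsum
      omega
    · have := one_le_sum_of_ne_zero hk
      omega
  have hHsum : ∑ x, H x = m := by
    rw [Fintype.sum_sum_type]
    simpa only [H, Sum.elim_inl, Sum.elim_inr, sum_sigma_single_one] using hsum
  have hmem : ∏ x, w (H x) ∈ splitProducts w m := hHsum ▸ prod_mem_splitProducts hcard hH
  simpa only [Fintype.prod_sum_type, H, Sum.elim_inl, Sum.elim_inr] using hM.2 hmem

lemma one_le_of_isGreatest_splitProducts (hw1 : ∀ i, 1 ≤ w (Pi.single i 1))
    {m : Fin s → ℕ} (hm : 1 < ∑ i, m i) {M : ℝ} (hM : IsGreatest (splitProducts w m) M) :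
    1 ≤ M := by
  have hm0 : m ≠ 0 := by
    rintro rfl
    simp at hm
  refine (one_le_prod_single hw1 m).trans ?_
  simpa using prod_mul_prod_single_le hm hM (G := Fin.elim0) (fun x => x.elim0) hm0 (by simp)

lemma prod_le_of_isGreatest_splitProducts (hw0 : ∀ y, y ≠ 0 → 0 ≤ w y)
    (hw1 : ∀ i, 1 ≤ w (Pi.single i 1)) {m : Fin s → ℕ} (hm : 1 < ∑ i, m i) {M : ℝ}
    (hM : IsGreatest (splitProducts w m) M) {ι : Type*} [Fintype ι] {G : ι → Fin s → ℕ}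
    (hG : ∀ x, G x ≠ 0) (hlt : ∑ x, G x < m) : ∏ x, w (G x) ≤ M :=
  (le_mul_of_one_le_right (prod_nonneg fun x _ => hw0 _ (hG x)) (one_le_prod_single hw1 _)).trans
    (prod_mul_prod_single_le hm hM hG (tsub_pos_of_lt hlt).ne' (add_tsub_cancel_of_le hlt.le))

lemma prod_eq_one_of_sum_lt {β : Type*} [CommMonoid β] (f : (Fin s → ℕ) → β)
    {m : Fin s → ℕ} (hm : ∑ i, m i = 1) {ι : Type*} [Fintype ι] {G : ι → Fin s → ℕ}
    (hG : ∀ x, G x ≠ 0) (hlt : ∑ x, G x < m) : ∏ x, f (G x) = 1 := by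
  have : IsEmpty ι := ⟨fun x => by
    have h1 := one_le_sum_of_ne_zero (hG x)
    have h2 : ∑ i, G x i < ∑ i, m i := Fintype.sum_strictMono ((le_of_sum_eq rfl x).trans_lt hlt)
    omega⟩
  simp

end SplitProducts

section NormBounds

variable {α E : Type*} [NormedAddCommGroup E]

lemma norm_finsum_le {f : α → E} {g : α → ℝ} (hg : (Function.support g).Finite)
    (h : ∀ a, ‖f a‖ ≤ g a) : ‖∑ᶠ a, f a‖ ≤ ∑ᶠ a, g a := by
  have hf : Function.support f ⊆ hg.toFinset := fun a ha => by
    rw [Set.Finite.coe_toFinset, Function.mem_support]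
    intro hga
    exact ha (norm_le_zero_iff.1 (hga ▸ h a))
  rw [finsum_eq_sum_of_support_subset f hf, finsum_eq_sum_of_support_subset g hg.coe_toFinset.ge]
  exact (norm_sum_le _ _).trans (sum_le_sum fun a _ => h a)

lemma norm_finsum_mem_le {S : Set α} (hS : S.Finite) {f : α → E} {g : α → ℝ}
    (h : ∀ a ∈ S, ‖f a‖ ≤ g a) : ‖∑ᶠ a ∈ S, f a‖ ≤ ∑ᶠ a ∈ S, g a := by
  rw [finsum_mem_eq_finite_toFinset_sum _ hS, finsum_mem_eq_finite_toFinset_sum _ hS]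
  exact (norm_sum_le _ _).trans (sum_le_sum fun a ha => h a (hS.mem_toFinset.1 ha))

end NormBounds

lemma norm_finsum_mem_finsum_mul_finsum_mem_le {κ π ι 𝕜 : Type*} [NormedDivisionRing 𝕜]
    {A : κ → π → 𝕜} (hA : ∀ k, {p | A k p ≠ 0}.Finite) {K : Set κ} (hK : K.Finite)
    {T : κ → Set ι} (hT : ∀ k, (T k).Finite) {X : κ → π → ι → 𝕜} {Y : κ → π → ι → ℝ} {M : ℝ}
    (h : ∀ k ∈ K, ∀ p, ∀ l ∈ T k, ‖X k p l‖ ≤ M * Y k p l) :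
    ‖∑ᶠ k ∈ K, ∑ᶠ p, A k p * ∑ᶠ l ∈ T k, X k p l‖ ≤
      M * ∑ᶠ k ∈ K, ∑ᶠ p, ‖A k p‖ * ∑ᶠ l ∈ T k, Y k p l := by
  have hpull : ∑ᶠ k ∈ K, ∑ᶠ p, ‖A k p‖ * ∑ᶠ l ∈ T k, M * Y k p l =
      M * ∑ᶠ k ∈ K, ∑ᶠ p, ‖A k p‖ * ∑ᶠ l ∈ T k, Y k p l := by
    simp only [← mul_finsum_mem, mul_left_comm _ M, ← mul_finsum]
  refine (norm_finsum_mem_le hK fun k hk => norm_finsum_le ((hA k).subset fun p hp => ?_)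
    fun p => ?_).trans_eq hpull
  · exact fun hA0 => hp (by simp [hA0])
  · rw [norm_mul]
    gcongr
    exact norm_finsum_mem_le (hT k) fun l hl => h k hk p l hl

section TupleSums

variable {s : ℕ}

lemma finite_tuples (p : ℕ) (l : Fin s → ℕ) :
    {f : Fin p → Fin s → ℕ | (∀ t, f t ≠ 0) ∧ ∑ t, f t = l}.Finite :=
  (finite_setOf_sum_eq _ l).subset fun _ hf => hf.2

lemma norm_tupleSumC_le {g : (Fin s → ℕ) → ℂ} {D : (Fin s → ℕ) → ℝ} {p : ℕ} {l : Fin s → ℕ}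
    (h : ∀ y, y ≠ 0 → y ≤ l → ‖g y‖ ≤ D y) : ‖tupleSumC s g p l‖ ≤ tupleSumR s D p l := by
  refine norm_finsum_mem_le (finite_tuples p l) fun f hf => ?_
  rw [norm_prod]
  exact prod_le_prod (fun _ _ => norm_nonneg _) fun t _ => h _ (hf.1 t) (le_of_sum_eq hf.2 t)

lemma tupleSumR_eq_sum (C : (Fin s → ℕ) → ℝ) (p : ℕ) (l : Fin s → ℕ) :
    tupleSumR s C p l = ∑ f ∈ (finite_tuples p l).toFinset, ∏ t, C (f t) :=
  finsum_mem_eq_finite_toFinset_sum _ _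

lemma prod_tupleSumR_mul_le {ι : Type*} [Fintype ι] [DecidableEq ι] {w C : (Fin s → ℕ) → ℝ}
    (hC : ∀ y, y ≠ 0 → 0 ≤ C y) {p : ι → ℕ} {ls : ι → Fin s → ℕ} {M : ℝ}
    (hM : ∀ F : (j : ι) → Fin (p j) → Fin s → ℕ, (∀ j t, F j t ≠ 0) → (∀ j, ∑ t, F j t = ls j) →
      ∏ j, ∏ t, w (F j t) ≤ M) :
    ∏ j, tupleSumR s (fun y => w y * C y) (p j) (ls j) ≤ M * ∏ j, tupleSumR s C (p j) (ls j) := by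
  simp_rw [tupleSumR_eq_sum, prod_mul_distrib, prod_univ_sum, mul_sum]
  refine sum_le_sum fun F hF => ?_
  simp only [Fintype.mem_piFinset, Set.Finite.mem_toFinset, Set.mem_ofPred_eq] at hF
  rw [prod_mul_distrib]
  exact mul_le_mul_of_nonneg_right (hM F (fun j => (hF j).1) fun j => (hF j).2)
    (prod_nonneg fun j _ => prod_nonneg fun t _ => hC _ ((hF j).1 t))

end TupleSums


lemma one_le_smax {s : ℕ} (q : Fin s → ℂ) (y : Fin s → ℕ) : 1 ≤ smax s q y :=
  le_max_left _ _

lemma one_le_smax_pow_mul_single {s n : ℕ} (q : Fin s → ℂ) {δ : (Fin s → ℕ) → ℝ}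
    (hδ1 : ∀ m : Fin s → ℕ, ∑ i, m i = 1 → δ m = 1) (i : Fin s) :
    1 ≤ smax s q (Pi.single i 1) ^ n * δ (Pi.single i 1) := by
  rw [hδ1 _ (by simp), mul_one]
  exact one_le_pow₀ (one_le_smax q _)

lemma delta_nonneg {s n : ℕ} {q : Fin s → ℂ} {ε δ μ : (Fin s → ℕ) → ℝ} (hε0 : ∀ m, 0 ≤ ε m)
    (hδ1 : ∀ m : Fin s → ℕ, ∑ i, m i = 1 → δ m = 1)
    (hμ : ∀ m : Fin s → ℕ, 1 < ∑ i, m i →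
      IsGreatest (splitProducts (fun y => smax s q y ^ n * δ y) m) (μ m))
    (hδ2 : ∀ m : Fin s → ℕ, 1 < ∑ i, m i → δ m = ε m * μ m) {y : Fin s → ℕ} (hy : y ≠ 0) :
    0 ≤ δ y := by
  rcases (one_le_sum_of_ne_zero hy).eq_or_lt with h | h
  · exact (hδ1 y h.symm).symm ▸ zero_le_one
  · exact (hδ2 y h).symm ▸ mul_nonneg (hε0 y) (zero_le_one.trans
      (one_le_of_isGreatest_splitProducts (one_le_smax_pow_mul_single q hδ1) h (hμ y h)))

lemma norm_prod_pow_mul_le_smax_pow {s n j : ℕ} (q : Fin s → ℂ) (y : Fin s → ℕ) (hj : j ≤ n) :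
    ‖∏ i, q i ^ (j * y i)‖ ≤ smax s q y ^ n := by
  simp_rw [norm_prod, norm_pow, mul_comm j, pow_mul, prod_pow]
  exact (pow_le_pow_left₀ (by positivity) (le_max_right _ _) j).trans
    (pow_le_pow_right₀ (one_le_smax q y) hj)

lemma norm_le_of_norm_mul_le {𝕜 : Type*} [NormedDivisionRing 𝕜] {a x : 𝕜} {B : ℝ} (ha : a ≠ 0) (h : ‖a * x‖ ≤ B) :
    ‖x‖ ≤ 1 / ‖a‖ * B := by
  rw [one_div_mul_eq_div, le_div_iff₀ (norm_pos_iff.2 ha), mul_comm, ← norm_mul]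
  exact h

lemma norm_eval_mul_le_of_splits {s n : ℕ} {L : Polynomial ℂ} {Λ : ℂ} {q : Fin s → ℂ}
    {A : (Fin s → ℕ) → (Fin (n + 1) → ℕ) → ℂ}
    (hA : {kp : (Fin s → ℕ) × (Fin (n + 1) → ℕ) | A kp.1 kp.2 ≠ 0}.Finite)
    {c : (Fin s → ℕ) → ℂ} (hc : ReducedRec s n L Λ q A c) {ν' : ℝ} {C : (Fin s → ℕ) → ℝ}
    (hC0 : ∀ m : Fin s → ℕ, m ≠ 0 → 0 ≤ C m) (hC : MajorantRec s n ν' A C)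
    {δ : (Fin s → ℕ) → ℝ} {m : Fin s → ℕ} (hm : m ≠ 0)
    (ih : ∀ y, y < m → y ≠ 0 → ‖c y‖ ≤ δ y * C y) {M : ℝ}
    (hM : ∀ (ι : Type) [Fintype ι] (G : ι → Fin s → ℕ), (∀ x, G x ≠ 0) → ∑ x, G x < m →
      ∏ x, smax s q (G x) ^ n * δ (G x) ≤ M) :
    ‖Polynomial.eval (Λ * ∏ i, q i ^ m i) L * c m‖ ≤ M * (ν' * C m) := by
  rw [hc m hm, hC m hm]
  refine norm_finsum_mem_finsum_mul_finsum_mem_le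
    (fun k => hA.preimage (Prod.mk_right_injective k).injOn)
    ((Set.finite_Iic m).subset fun k hk => hk.2) (fun k => finite_setOf_sum_eq _ _) ?_
  rintro k ⟨hk0, hkm⟩ p ls (hls : ∑ j, ls j = m - k)
  have hlt : m - k < m := tsub_lt_self_of_le hk0 hkm
  rw [norm_prod]
  calc ∏ j, ‖tupleSumC s (fun y => (∏ i, q i ^ (j.1 * y i)) * c y) (p j) (ls j)‖
      ≤ ∏ j, tupleSumR s (fun y => smax s q y ^ n * δ y * C y) (p j) (ls j) := by
        refine prod_le_prod (fun _ _ => norm_nonneg _) fun j _ =>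
          norm_tupleSumC_le fun y hy hyl => ?_
        rw [norm_mul, mul_assoc]
        exact mul_le_mul (norm_prod_pow_mul_le_smax_pow q y j.is_le)
          (ih y ((hyl.trans (le_of_sum_eq hls j)).trans_lt hlt) hy) (norm_nonneg _)
          (pow_nonneg (zero_le_one.trans (one_le_smax q y)) n)
    _ ≤ M * ∏ j, tupleSumR s C (p j) (ls j) := by
        refine prod_tupleSumR_mul_le hC0 fun F hF0 hFsum => ?_
        have hsum : ∑ x : (Σ j, Fin (p j)), F x.1 x.2 = m - k := by
          rw [Fintype.sum_sigma, sum_congr rfl fun j _ => hFsum j, hls]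
        simpa only [Fintype.prod_sigma] using
          hM (Σ j, Fin (p j)) (fun x => F x.1 x.2) (fun x => hF0 x.1 x.2) (hsum ▸ hlt)

theorem stmt11_general (s : ℕ) (Λ : ℂ) (q : Fin s → ℂ)
    (L : Polynomial ℂ)
    (hL : ∀ m : Fin s → ℕ, m ≠ 0 → Polynomial.eval (Λ * ∏ i, q i ^ m i) L ≠ 0)
    (n : ℕ)
    (ε δ μ : (Fin s → ℕ) → ℝ)
    (hε : ∀ m : Fin s → ℕ, ε m = 1 / ‖Polynomial.eval (Λ * ∏ i, q i ^ m i) L‖)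
    (hδ1 : ∀ m : Fin s → ℕ, (∑ i, m i) = 1 → δ m = 1)
    (hμ : ∀ m : Fin s → ℕ, 1 < ∑ i, m i →
      IsGreatest {x : ℝ | ∃ l : List (Fin s → ℕ), 2 ≤ l.length ∧ (∀ y ∈ l, y ≠ 0) ∧
        l.sum = m ∧ (l.map fun y => smax s q y ^ n * δ y).prod = x} (μ m))
    (hδ2 : ∀ m : Fin s → ℕ, 1 < ∑ i, m i → δ m = ε m * μ m)
    (ν' : ℝ) (hν'1 : ν' ≤ 1)
    (hν'ε : ∀ m : Fin s → ℕ, (∑ i, m i) = 1 → ν' * ε m ≤ 1)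
    (A : (Fin s → ℕ) → (Fin (n + 1) → ℕ) → ℂ)
    (hA : {kp : (Fin s → ℕ) × (Fin (n + 1) → ℕ) | A kp.1 kp.2 ≠ 0}.Finite)
    (c : (Fin s → ℕ) → ℂ) (hc : ReducedRec s n L Λ q A c)
    (C : (Fin s → ℕ) → ℝ) (hC0 : ∀ m : Fin s → ℕ, m ≠ 0 → 0 ≤ C m)
    (hC : MajorantRec s n ν' A C) :
    ∀ m : Fin s → ℕ, m ≠ 0 → ‖c m‖ ≤ δ m * C m := by
  have hε0 (m : Fin s → ℕ) : 0 ≤ ε m := by rw [hε]; positivity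
  have hw1 := one_le_smax_pow_mul_single (n := n) q hδ1
  have hw0 (y : Fin s → ℕ) (hy : y ≠ 0) : 0 ≤ smax s q y ^ n * δ y :=
    mul_nonneg (pow_nonneg (zero_le_one.trans (one_le_smax q y)) n)
      (delta_nonneg hε0 hδ1 hμ hδ2 hy)
  intro m
  induction m using WellFoundedLT.induction with | _ m ih
  intro hm
  rcases (one_le_sum_of_ne_zero hm).eq_or_lt with h1 | h1
  · calc ‖c m‖ ≤ ε m * (1 * (ν' * C m)) := hε m ▸ norm_le_of_norm_mul_le (hL m hm)
          (norm_eval_mul_le_of_splits hA hc hC0 hC hm ih fun _ _ _ hG hlt =>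
            (prod_eq_one_of_sum_lt (fun y => smax s q y ^ n * δ y) h1.symm hG hlt).le)
      _ = (ν' * ε m) * C m := by ring
      _ ≤ δ m * C m := by
        rw [hδ1 m h1.symm]
        exact mul_le_mul_of_nonneg_right (hν'ε m h1.symm) (hC0 m hm)
  · calc ‖c m‖ ≤ ε m * (μ m * (ν' * C m)) := hε m ▸ norm_le_of_norm_mul_le (hL m hm)
          (norm_eval_mul_le_of_splits hA hc hC0 hC hm ih fun _ _ _ hG hlt =>
            prod_le_of_isGreatest_splitProducts hw0 hw1 h1 (hμ m h1) hG hlt)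
      _ ≤ ε m * (μ m * (1 * C m)) := by
        gcongr
        exacts [hε0 m, zero_le_one.trans (one_le_of_isGreatest_splitProducts hw1 h1 (hμ m h1)),
          hC0 m hm]
      _ = δ m * C m := by rw [hδ2 m h1]; ring

/-- Lemma 2 of the paper, comparing the solution of the reduced
q-difference equation with the solution of the majorant equation. -/
theorem stmt11 (s : ℕ) (hs : 1 ≤ s) (Λ : ℂ) (hΛ : Λ ≠ 0) (q : Fin s → ℂ) (hq : ∀ i, q i ≠ 0)
    (L : Polynomial ℂ)
    (hL : ∀ m : Fin s → ℕ, m ≠ 0 → Polynomial.eval (Λ * ∏ i, q i ^ m i) L ≠ 0)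
    (n : ℕ) (hn : 1 ≤ n)
    (ε δ μ : (Fin s → ℕ) → ℝ)
    (hε : ∀ m : Fin s → ℕ, ε m = 1 / ‖Polynomial.eval (Λ * ∏ i, q i ^ m i) L‖)
    (hδ1 : ∀ m : Fin s → ℕ, (∑ i, m i) = 1 → δ m = 1)
    (hμ : ∀ m : Fin s → ℕ, 1 < ∑ i, m i →
      IsGreatest {x : ℝ | ∃ l : List (Fin s → ℕ), 2 ≤ l.length ∧ (∀ y ∈ l, y ≠ 0) ∧
        l.sum = m ∧ (l.map fun y => smax s q y ^ n * δ y).prod = x} (μ m))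
    (hδ2 : ∀ m : Fin s → ℕ, 1 < ∑ i, m i → δ m = ε m * μ m)
    (ν' : ℝ) (hν'0 : 0 < ν') (hν'1 : ν' ≤ 1)
    (hν'ε : ∀ m : Fin s → ℕ, (∑ i, m i) = 1 → ν' * ε m ≤ 1)
    (A : (Fin s → ℕ) → (Fin (n + 1) → ℕ) → ℂ)
    (hA : {kp : (Fin s → ℕ) × (Fin (n + 1) → ℕ) | A kp.1 kp.2 ≠ 0}.Finite)
    (c : (Fin s → ℕ) → ℂ) (hc : ReducedRec s n L Λ q A c)
    (C : (Fin s → ℕ) → ℝ) (hC0 : ∀ m : Fin s → ℕ, m ≠ 0 → 0 ≤ C m)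
    (hC : MajorantRec s n ν' A C) :
    ∀ m : Fin s → ℕ, m ≠ 0 → ‖c m‖ ≤ δ m * C m :=
  stmt11_general s Λ q L hL n ε δ μ hε hδ1 hμ hδ2 ν' hν'1 hν'ε A hA c hc C hC0 hC
end
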